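/- Let Θ be a DTAS which self-assembles Q using at most m_b black tile types and m_g gray tile types, and let s₁ and s₂ be supertiles in Q_Θ. Then: (i) if s₁ and s₂ portray different colors, they do not share any tile type in any of the positions A, B₁*, B₂*, C₁, C₂; (ii) if s₁(E) ≠ s₂(E), they do not share any tile type in positions A, B₁* or C₁; (iii) if s₁(N) ≠ s₂(N), they do not share any tile type in positions A, B₂* or C₂. The statements hold for all available positions of incomplete supertiles. -/
import Mathlib


/-- A colored Wang tile with a color and four glues (north, east, south, west). -/
structure Tile (C G : Type) where
  color : C
  north : G
  east : G
  south : G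
  west : G
deriving DecidableEq

/-- A rectilinear tile assembly system: a finite set of tile types together with
an L-shaped seed, given by its north glues (bottom arm) and east glues (left arm). -/
structure RTAS (C G : Type) where
  tiles : Finset (Tile C G)
  seedN : ℕ → G
  seedE : ℕ → G

/-- A tile assignment for the `M × N` rectangle spanned by the seed:
every tile belongs to the system, west/south glues match the east/north glues of the
west/south neighbours, and the seed glues on the boundary. -/
def IsAssignment {C G : Type} (T : RTAS C G) (M N : ℕ) (f : ℕ → ℕ → Tile C G) : Prop :=
  (∀ x < M, ∀ y < N, f x y ∈ T.tiles) ∧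
  (∀ y < N, (f 0 y).west = T.seedE y) ∧
  (∀ x < M, (f x 0).south = T.seedN x) ∧
  (∀ x, x + 1 < M → ∀ y < N, (f (x + 1) y).west = (f x y).east) ∧
  (∀ x < M, ∀ y, y + 1 < N → (f x (y + 1)).south = (f x y).north)

/-- `T` self-assembles the `M × N` pattern `P` if some tile assignment realizes `P`. -/
def SelfAssembles {C G : Type} (T : RTAS C G) (M N : ℕ) (P : ℕ → ℕ → C) : Prop :=
  ∃ f, IsAssignment T M N f ∧ ∀ x < M, ∀ y < N, (f x y).color = P x y

/-- A directed RTAS: distinct tile types differ in their south or west glue. -/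
def DirectedTAS {C G : Type} (T : RTAS C G) : Prop :=
  ∀ t₁ ∈ T.tiles, ∀ t₂ ∈ T.tiles, t₁ ≠ t₂ → t₁.south ≠ t₂.south ∨ t₁.west ≠ t₂.west

/-- The set of colors occurring in the `M × N` pattern `P`. -/
def colorsOf {C : Type} [DecidableEq C] (M N : ℕ) (P : ℕ → ℕ → C) : Finset C :=
  (Finset.range M ×ˢ Finset.range N).image fun q => P q.1 q.2

/-- The named colors used in the subpatterns of the pattern `P_F` of the paper.
`uniq n` are the "unique" filler colors. -/
inductive PColor where
  | orC | plus | minus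
  | Z1 | Z2 | Z3 | Z4
  | aC | bW | bD | cW | cD | dC
  | arrW (w : Fin 2)
  | arrD (w : Fin 2)
  | upW (s : Fin 2)
  | upD (s : Fin 2)
  | gate (i : Fin 4)
  | X (i : Fin 8)
  | Y (i : Fin 8)
  | varW (v : ℕ)
  | negW (v : ℕ)
  | varAux (v : ℕ)
  | varMod (v : ℕ)
  | varModd (v : ℕ)
  | uniq (n : ℕ)
deriving DecidableEq

/-- The `16 × 2` subpattern `p`: eight `2 × 2` blocks, block `i` having colors
`Xᵢ` (bottom-left), `OR` (bottom-right, top-left) and `Yᵢ` (top-right). -/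
def pPat : ℕ → ℕ → PColor := fun x y =>
  if y = 0 then
    if x % 2 = 0 then PColor.X ⟨x / 2 % 8, Nat.mod_lt _ (by norm_num)⟩ else PColor.orC
  else
    if x % 2 = 0 then PColor.orC else PColor.Y ⟨x / 2 % 8, Nat.mod_lt _ (by norm_num)⟩

/-- The `4 × 4` subpatterns `q₁, …, q₄` (index `idx = 0, …, 3`), with west input
`w = idx / 2` and south input `s = idx % 2` feeding an `OR`-colored position. -/
def qPat (idx : Fin 4) : ℕ → ℕ → PColor := fun x y =>
  let wv : Fin 2 := ⟨idx.val / 2, by have := idx.isLt; omega⟩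
  let sv : Fin 2 := ⟨idx.val % 2, Nat.mod_lt _ (by norm_num)⟩
  match x, y with
  | 0, 0 => PColor.Z1
  | 1, 0 => PColor.Z2
  | 2, 0 => PColor.upD sv
  | 3, 0 => PColor.bD
  | 0, 1 => PColor.Z3
  | 1, 1 => PColor.aC
  | 2, 1 => PColor.upW sv
  | 3, 1 => PColor.bW
  | 0, 2 => PColor.arrD wv
  | 1, 2 => PColor.arrW wv
  | 2, 2 => PColor.orC
  | 3, 2 => if idx.val = 0 then PColor.minus else PColor.plus
  | 0, 3 => PColor.cD
  | 1, 3 => PColor.cW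
  | 2, 3 => PColor.gate idx
  | _, _ => PColor.dC

/-- The `6 × 3` subpattern `q₅`: bottom row `a ↑₀ ↑₁ ↑₀ ↑₁ b`, middle row
`→₀ OR OR OR OR +`, top row `c A B C D d`. -/
def q5Pat : ℕ → ℕ → PColor := fun x y =>
  match y, x with
  | 0, 0 => PColor.aC
  | 0, 1 => PColor.upW 0
  | 0, 2 => PColor.upW 1
  | 0, 3 => PColor.upW 0
  | 0, 4 => PColor.upW 1
  | 0, _ => PColor.bW
  | 1, 0 => PColor.arrW 0
  | 1, 5 => PColor.plus
  | 1, _ => PColor.orC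
  | 2, 0 => PColor.cW
  | 2, 1 => PColor.gate 0
  | 2, 2 => PColor.gate 1
  | 2, 3 => PColor.gate 2
  | 2, 4 => PColor.gate 3
  | _, _ => PColor.dC

/-- A literal: a variable index together with its sign (`true` = positive). -/
abbrev Lit := ℕ × Bool

/-- A clause with three literals. -/
abbrev Clause3 := Lit × Lit × Lit

/-- A boolean formula in 3-CNF over the variables `0, …, numVars - 1`. -/
structure CNF3 where
  numVars : ℕ
  clauses : List Clause3
  wf : ∀ cl ∈ clauses, cl.1.1 < numVars ∧ cl.2.1.1 < numVars ∧ cl.2.2.1 < numVars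

/-- Value of a literal under a variable assignment. -/
def litVal (f : ℕ → Bool) (l : Lit) : Bool := if l.2 then f l.1 else ! f l.1

/-- A 3-CNF formula is satisfiable if some assignment makes every clause true. -/
def CNF3.Satisfiable (F : CNF3) : Prop :=
  ∃ f : ℕ → Bool, ∀ cl ∈ F.clauses,
    (litVal f cl.1 || litVal f cl.2.1 || litVal f cl.2.2) = true

/-- The `2 × 2` subpattern `r₁(v)`. -/
def r1Pat (v : ℕ) : ℕ → ℕ → PColor := fun x y =>
  match x, y with
  | 0, 0 => PColor.Z4
  | 1, 0 => PColor.varW v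
  | 0, 1 => PColor.varAux v
  | _, _ => PColor.varMod v

/-- The `2 × 2` subpattern `r₂(v)`. -/
def r2Pat (v : ℕ) : ℕ → ℕ → PColor := fun x y =>
  match x, y with
  | 0, 0 => PColor.Z4
  | 1, 0 => PColor.negW v
  | 0, 1 => PColor.varAux v
  | _, _ => PColor.varModd v

/-- The `4 × 2` subpattern `r₃(v)`: bottom row `a v ¬v b`, top row `→₀ OR OR +`. -/
def r3Pat (v : ℕ) : ℕ → ℕ → PColor := fun x y =>
  match y, x with
  | 0, 0 => PColor.aC
  | 0, 1 => PColor.varW v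
  | 0, 2 => PColor.negW v
  | 0, _ => PColor.bW
  | 1, 0 => PColor.arrW 0
  | 1, 3 => PColor.plus
  | _, _ => PColor.orC

/-- The color of a literal. -/
def litColor (l : Lit) : PColor := if l.2 then PColor.varW l.1 else PColor.negW l.1

/-- The `5 × 2` subpattern `s(C)` for a clause `C = (c₁ ∨ c₂ ∨ c₃)`:
bottom row `a c₁ c₂ c₃ b`, top row `→₀ OR OR OR +`. -/
def sPat (cl : Clause3) : ℕ → ℕ → PColor := fun x y =>
  match y, x with
  | 0, 0 => PColor.aC
  | 0, 1 => litColor cl.1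
  | 0, 2 => litColor cl.2.1
  | 0, 3 => litColor cl.2.2
  | 0, _ => PColor.bW
  | 1, 0 => PColor.arrW 0
  | 1, 4 => PColor.plus
  | _, _ => PColor.orC

/-- A rectangular block: width, height and contents. -/
abbrev PBlock := ℕ × ℕ × (ℕ → ℕ → PColor)

/-- The list of subpatterns of `P_F`: `p`, `q₁, …, q₅`, then `r₁(v), r₂(v), r₃(v)`
for every variable `v`, then `s(C)` for every clause `C`. -/
def blocksOf (F : CNF3) : List PBlock :=
  [(16, 2, pPat), (4, 4, qPat 0), (4, 4, qPat 1), (4, 4, qPat 2), (4, 4, qPat 3),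
    (6, 3, q5Pat)]
    ++ (List.range F.numVars).flatMap
        (fun v => [(2, 2, r1Pat v), (2, 2, r2Pat v), (4, 2, r3Pat v)])
    ++ F.clauses.map (fun cl => (5, 2, sPat cl))

/-- Place the blocks side by side (starting at column `x0`, occupying rows `1, …, h`),
with one column of unique colors before each block and after the last one; all the
remaining positions carry unique colors (`uniq` of the position code). -/
def place : List PBlock → ℕ → ℕ → ℕ → PColor
  | [], _, x, y => PColor.uniq (Nat.pair x y)
  | b :: bs, x0, x, y =>
      if x0 ≤ x ∧ x < x0 + b.1 ∧ 1 ≤ y ∧ y < 1 + b.2.1 then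
        b.2.2 (x - x0) (y - 1)
      else if x < x0 + b.1 + 1 then PColor.uniq (Nat.pair x y)
      else place bs (x0 + b.1 + 1) x y

/-- The pattern `P_F` of the paper, of height `6` and width `45 + 11·|V| + 6·ℓ`. -/
def patF (F : CNF3) : ℕ → ℕ → PColor := fun x y => place (blocksOf F) 1 x y

/-- The width of the pattern `P_F`. -/
def widthF (F : CNF3) : ℕ := 45 + 11 * F.numVars + 6 * F.clauses.length

/-- The three colors black, white, gray. -/
inductive BWG where
  | black | white | gray
deriving DecidableEq

/-- The number of tile types of a given color in a tile assembly system. -/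
def countColor {C G : Type} [DecidableEq C] (T : RTAS C G) (c : C) : ℕ :=
  (T.tiles.filter (fun t => t.color = c)).card

/-- The `ℓ × ℓ` supertile portraying the color `c ∈ [k]` (with `ℓ = 5k + 8`):
white bottom row and left column; gray top row and right column except for one
white position at index `c + 1` of each (the color counters); black interior. -/
def superPat (ℓ c : ℕ) : ℕ → ℕ → BWG := fun x y =>
  if y = 0 then BWG.white
  else if x = 0 then BWG.white
  else if y = ℓ - 1 then (if x = c + 1 then BWG.white else BWG.gray)
  else if x = ℓ - 1 then (if y = c + 1 then BWG.white else BWG.gray)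
  else BWG.black

/-- The black/white/gray pattern `Q` built from the `w × h` pattern `P` with colors
in `[k]`: each position `(x, y)` of `P` is replaced by the `ℓ × ℓ` supertile
portraying `P x y` (supertiles in the bottom row/left column of `P` are
incomplete, lacking their white bottom row/left column), and three gadget rows
and three gadget columns are appended at the top and at the right. -/
def QPat (k w h : ℕ) (P : ℕ → ℕ → ℕ) : ℕ → ℕ → BWG := fun X Y =>
  let ℓ := 5 * k + 8
  if X + 1 < ℓ * w ∧ Y + 1 < ℓ * h then
    superPat ℓ (P ((X + 1) / ℓ) ((Y + 1) / ℓ)) ((X + 1) % ℓ) ((Y + 1) % ℓ)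
  else if X + 1 < ℓ * w then
    -- the three gadget rows
    if Y = ℓ * h then (if X = k then BWG.white else BWG.gray)
    else (if (X + 1) % ℓ = ℓ - 1 then BWG.gray else BWG.black)
  else if Y + 1 < ℓ * h then
    -- the three gadget columns
    if X = ℓ * w then (if Y = k then BWG.white else BWG.gray)
    else (if (Y + 1) % ℓ = ℓ - 1 then BWG.gray else BWG.black)
  else
    -- the top-right 3 × 3 corner
    if X = ℓ * w ∨ Y = ℓ * h then BWG.gray else BWG.black

/-- Width of the pattern `Q`. -/
def QW (k w : ℕ) : ℕ := (5 * k + 8) * w + 2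

/-- Height of the pattern `Q`. -/
def QH (k h : ℕ) : ℕ := (5 * k + 8) * h + 2

/-- `(P, m) ∈ ℐ` (with `m = k + 3`): `P` is, up to an identification `ρ` of its
colors with `[k] = {1, …, k}`, the pattern `P_F` of a 3-CNF formula `F`. -/
def InI (k w h : ℕ) (P : ℕ → ℕ → ℕ) : Prop :=
  ∃ (F : CNF3) (ρ : PColor → ℕ),
    w = widthF F ∧ h = 6 ∧
    Set.BijOn ρ (↑(colorsOf (widthF F) 6 (patF F))) (Set.Icc 1 k) ∧
    ∀ x < w, ∀ y < h, P x y = ρ (patF F x y)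

/-- The tile assignment of the supertile at `(x, y)` of the supertile grid,
as a partial function on inner coordinates: inner position `(i, j)` corresponds
to the global position `(x·ℓ + i - 1, y·ℓ + j - 1)`; positions with `i = 0`
(resp. `j = 0`) exist only if `x ≥ 1` (resp. `y ≥ 1`). -/
def superOpt {G : Type} (ℓ : ℕ) (f : ℕ → ℕ → Tile BWG G) (x y : ℕ) :
    ℕ → ℕ → Option (Tile BWG G) := fun i j =>
  if i < ℓ ∧ j < ℓ ∧ (1 ≤ x ∨ 1 ≤ i) ∧ (1 ≤ y ∨ 1 ≤ j) then
    some (f (x * ℓ + i - 1) (y * ℓ + j - 1))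
  else none

/-- `s(N)`: the north output of a supertile, i.e. the north glue of its tile in
position `C₂` (inner position `(0, ℓ - 1)`); defined for `x ≥ 1`. -/
def stN {G : Type} (ℓ : ℕ) (f : ℕ → ℕ → Tile BWG G) (x y : ℕ) : G :=
  (f (x * ℓ - 1) (y * ℓ + ℓ - 2)).north

/-- `s(E)`: the east output of a supertile, i.e. the east glue of its tile in
position `C₁` (inner position `(ℓ - 1, 0)`); defined for `y ≥ 1`. -/
def stE {G : Type} (ℓ : ℕ) (f : ℕ → ℕ → Tile BWG G) (x y : ℕ) : G :=
  (f (x * ℓ + ℓ - 2) (y * ℓ - 1)).east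

/-- `s(S)`: the south input of a supertile, i.e. the south glue of its tile in
position `A` (inner position `(0, 0)`); defined for `x, y ≥ 1`. -/
def stS {G : Type} (ℓ : ℕ) (f : ℕ → ℕ → Tile BWG G) (x y : ℕ) : G :=
  (f (x * ℓ - 1) (y * ℓ - 1)).south

/-- `s(W)`: the west input of a supertile, i.e. the west glue of its tile in
position `A` (inner position `(0, 0)`); defined for `x, y ≥ 1`. -/
def stW {G : Type} (ℓ : ℕ) (f : ℕ → ℕ → Tile BWG G) (x y : ℕ) : G :=
  (f (x * ℓ - 1) (y * ℓ - 1)).west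

/-- The inner position `p` is available in the supertile at `(x, y)` (positions with
`i = 0`, resp. `j = 0`, are missing from incomplete supertiles with `x = 0`,
resp. `y = 0`). -/
def availAt (x y : ℕ) (p : ℕ × ℕ) : Prop :=
  (1 ≤ x ∨ 1 ≤ p.1) ∧ (1 ≤ y ∨ 1 ≤ p.2)

set_option linter.unusedSectionVars false
set_option linter.unusedVariables false
set_option maxHeartbeats 1000000
section Aux

open Finset

variable {G : Type} [DecidableEq G]

/-- All basic consequences of the hypotheses of the main theorem, bundled. -/
structure Ctx (k w h ℓ : ℕ) (P : ℕ → ℕ → ℕ) (Θ : RTAS BWG G)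
    (f : ℕ → ℕ → Tile BWG G) : Prop where
  hk : 1 ≤ k
  hw : 2 ≤ w
  hh : 1 ≤ h
  hl : ℓ = 5 * k + 8
  hPlo : ∀ x y, x < w → y < h → 1 ≤ P x y
  hPhi : ∀ x y, x < w → y < h → P x y ≤ k
  mem : ∀ X Y, X < ℓ * w + 2 → Y < ℓ * h + 2 → f X Y ∈ Θ.tiles
  hS : ∀ X Y, X < ℓ * w + 2 → Y + 1 < ℓ * h + 2 → (f X (Y + 1)).south = (f X Y).north
  hW : ∀ X Y, X + 1 < ℓ * w + 2 → Y < ℓ * h + 2 → (f (X + 1) Y).west = (f X Y).east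
  col : ∀ X Y, X < ℓ * w + 2 → Y < ℓ * h + 2 → (f X Y).color = QPat k w h P X Y
  dir : DirectedTAS Θ
  hgray : (Θ.tiles.filter (fun t => t.color = BWG.gray)).card ≤ 2 * k + 3
  hblack : (Θ.tiles.filter (fun t => t.color = BWG.black)).card ≤ 1

namespace Ctx

variable {k w h ℓ : ℕ} {P : ℕ → ℕ → ℕ} {Θ : RTAS BWG G} {f : ℕ → ℕ → Tile BWG G}
variable (C : Ctx k w h ℓ P Θ f)
include C

lemma L13 : 13 ≤ ℓ := by have := C.hl; have := C.hk; omega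

lemma Lw : ℓ * 2 ≤ ℓ * w := Nat.mul_le_mul_left ℓ C.hw

lemma Lh : ℓ * 1 ≤ ℓ * h := Nat.mul_le_mul_left ℓ C.hh

lemma mulb {x n : ℕ} (hx : x < n) : x * ℓ + ℓ ≤ ℓ * n := by
  calc x * ℓ + ℓ = (x + 1) * ℓ := by ring
  _ ≤ n * ℓ := Nat.mul_le_mul_right _ hx
  _ = ℓ * n := Nat.mul_comm _ _

lemma mulpred {y : ℕ} (hy : 1 ≤ y) : (y - 1) * ℓ + ℓ = y * ℓ := by
  have e : y - 1 + 1 = y := Nat.succ_pred_eq_of_pos hy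
  calc (y - 1) * ℓ + ℓ = (y - 1 + 1) * ℓ := by ring
  _ = y * ℓ := by rw [e]

lemma divh {x i : ℕ} (hi : i < ℓ) : (x * ℓ + i) / ℓ = x := by
  have hl : 0 < ℓ := by have := C.L13; omega
  rw [Nat.mul_comm, Nat.mul_add_div hl, Nat.div_eq_of_lt hi, Nat.add_zero]

lemma modh {x i : ℕ} (hi : i < ℓ) : (x * ℓ + i) % ℓ = i := by
  rw [Nat.mul_comm, Nat.mul_add_mod, Nat.mod_eq_of_lt hi]

/-- In a directed TAS, tiles are determined by their south and west glues. -/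
lemma dirEq {t₁ t₂ : Tile BWG G} (h₁ : t₁ ∈ Θ.tiles) (h₂ : t₂ ∈ Θ.tiles)
    (hs : t₁.south = t₂.south) (hwe : t₁.west = t₂.west) : t₁ = t₂ := by
  by_contra hne
  rcases C.dir t₁ h₁ t₂ h₂ hne with hd | hd
  exacts [hd hs, hd hwe]

lemma keyEq {X Y X' Y' : ℕ} (r1 : X < ℓ * w + 2) (r2 : Y < ℓ * h + 2)
    (r3 : X' < ℓ * w + 2) (r4 : Y' < ℓ * h + 2)
    (hs : (f X Y).south = (f X' Y').south) (hwe : (f X Y).west = (f X' Y').west) :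
    f X Y = f X' Y' :=
  C.dirEq (C.mem _ _ r1 r2) (C.mem _ _ r3 r4) hs hwe

/-- south glue = north glue of the tile below. -/
lemma sG {X Y : ℕ} (h1 : 1 ≤ Y) (rX : X < ℓ * w + 2) (rY : Y < ℓ * h + 2) :
    (f X Y).south = (f X (Y - 1)).north := by
  have := C.hS X (Y - 1) rX (by omega)
  rwa [Nat.sub_add_cancel h1] at this

/-- west glue = east glue of the tile to the left. -/
lemma wG {X Y : ℕ} (h1 : 1 ≤ X) (rX : X < ℓ * w + 2) (rY : Y < ℓ * h + 2) :
    (f X Y).west = (f (X - 1) Y).east := by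
  have := C.hW (X - 1) Y (by omega) rY
  rwa [Nat.sub_add_cancel h1] at this

/-- Master pattern-evaluation lemma inside a supertile. -/
lemma QPat_super {x y i j : ℕ} (hx : x < w) (hy : y < h) (hi : i < ℓ) (hj : j < ℓ)
    (h1 : 1 ≤ x * ℓ + i) (h2 : 1 ≤ y * ℓ + j) :
    QPat k w h P (x * ℓ + i - 1) (y * ℓ + j - 1) = superPat ℓ (P x y) i j := by
  have hxb : x * ℓ + ℓ ≤ ℓ * w := C.mulb hx
  have hyb : y * ℓ + ℓ ≤ ℓ * h := C.mulb hy
  have e1 : x * ℓ + i - 1 + 1 = x * ℓ + i := by omega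
  have e2 : y * ℓ + j - 1 + 1 = y * ℓ + j := by omega
  simp only [QPat]
  rw [← C.hl, e1, e2, if_pos (by constructor <;> omega), C.divh hi, C.divh hj,
    C.modh hi, C.modh hj]

lemma QPat_R1 {X : ℕ} (hX : X + 1 < ℓ * w) :
    QPat k w h P X (ℓ * h - 1) = (if (X + 1) % ℓ = ℓ - 1 then BWG.gray else BWG.black) := by
  have hh1 : ℓ * 1 ≤ ℓ * h := C.Lh
  have h13 := C.L13
  simp only [QPat]
  rw [← C.hl, if_neg (by omega), if_pos hX, if_neg (by omega)]

lemma QPat_R2 {X : ℕ} (hX : X + 1 < ℓ * w) :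
    QPat k w h P X (ℓ * h) = (if X = k then BWG.white else BWG.gray) := by
  simp only [QPat]
  rw [← C.hl, if_neg (by omega), if_pos hX, if_pos rfl]

lemma QPat_R3 {X : ℕ} (hX : X + 1 < ℓ * w) :
    QPat k w h P X (ℓ * h + 1) = (if (X + 1) % ℓ = ℓ - 1 then BWG.gray else BWG.black) := by
  simp only [QPat]
  rw [← C.hl, if_neg (by omega), if_pos hX, if_neg (by omega)]

lemma QPat_C1 {Y : ℕ} (hY : Y + 1 < ℓ * h) :
    QPat k w h P (ℓ * w - 1) Y = (if (Y + 1) % ℓ = ℓ - 1 then BWG.gray else BWG.black) := by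
  have hw1 : ℓ * 2 ≤ ℓ * w := C.Lw
  have h13 := C.L13
  simp only [QPat]
  rw [← C.hl, if_neg (by omega), if_neg (by omega), if_pos hY, if_neg (by omega)]

lemma QPat_C2 {Y : ℕ} (hY : Y + 1 < ℓ * h) :
    QPat k w h P (ℓ * w) Y = (if Y = k then BWG.white else BWG.gray) := by
  simp only [QPat]
  rw [← C.hl, if_neg (by omega), if_neg (by omega), if_pos hY, if_pos rfl]

lemma QPat_C3 {Y : ℕ} (hY : Y + 1 < ℓ * h) :
    QPat k w h P (ℓ * w + 1) Y = (if (Y + 1) % ℓ = ℓ - 1 then BWG.gray else BWG.black) := by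
  simp only [QPat]
  rw [← C.hl, if_neg (by omega), if_neg (by omega), if_pos hY, if_neg (by omega)]

lemma sp_bot (c i : ℕ) : superPat ℓ c i 0 = BWG.white := by
  simp [superPat]

lemma sp_left (c j : ℕ) : superPat ℓ c 0 j = BWG.white := by
  unfold superPat
  rcases eq_or_ne j 0 with rfl | hj
  · rw [if_pos rfl]
  · rw [if_neg hj, if_pos rfl]

lemma sp_top {c i : ℕ} (h1 : 1 ≤ i) (h2 : i ≤ ℓ - 2) :
    superPat ℓ c i (ℓ - 1) = (if i = c + 1 then BWG.white else BWG.gray) := by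
  have h13 := C.L13
  unfold superPat
  rw [if_neg (by omega), if_neg (by omega), if_pos rfl]

lemma sp_right {c j : ℕ} (h1 : 1 ≤ j) (h2 : j ≤ ℓ - 2) :
    superPat ℓ c (ℓ - 1) j = (if j = c + 1 then BWG.white else BWG.gray) := by
  have h13 := C.L13
  unfold superPat
  rw [if_neg (by omega), if_neg (by omega), if_neg (by omega), if_pos rfl]

lemma sp_corner {c : ℕ} (hc : c ≤ k) : superPat ℓ c (ℓ - 1) (ℓ - 1) = BWG.gray := by
  have h13 := C.L13
  have hl := C.hl
  unfold superPat
  rw [if_neg (by omega), if_neg (by omega), if_pos rfl, if_neg (by omega)]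

lemma sp_int {c i j : ℕ} (h1 : 1 ≤ i) (h2 : i ≤ ℓ - 2) (h3 : 1 ≤ j) (h4 : j ≤ ℓ - 2) :
    superPat ℓ c i j = BWG.black := by
  have h13 := C.L13
  unfold superPat
  rw [if_neg (by omega), if_neg (by omega), if_neg (by omega), if_neg (by omega)]

/-- Color of a tile inside a supertile (with flexible coordinates). -/
lemma colSuper {x y i j X Y : ℕ} (hx : x < w) (hy : y < h) (hi : i < ℓ) (hj : j < ℓ)
    (h1 : 1 ≤ x * ℓ + i) (h2 : 1 ≤ y * ℓ + j)
    (eX : X = x * ℓ + i - 1) (eY : Y = y * ℓ + j - 1) :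
    (f X Y).color = superPat ℓ (P x y) i j := by
  subst eX; subst eY
  have hj' : j < ℓ := by have := C.L13; omega
  have hxb : x * ℓ + ℓ ≤ ℓ * w := C.mulb hx
  have hyb : y * ℓ + ℓ ≤ ℓ * h := C.mulb hy
  rw [C.col _ _ (by omega) (by omega), C.QPat_super hx hy hi hj' h1 h2]

end Ctx
end Aux

namespace Ctx2Block
end Ctx2Block

namespace Ctx
open Finset
variable {G : Type} [DecidableEq G]
variable {k w h ℓ : ℕ} {P : ℕ → ℕ → ℕ} {Θ : RTAS BWG G} {f : ℕ → ℕ → Tile BWG G}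
variable (C : Ctx k w h ℓ P Θ f)
include C

lemma black00 : (f 0 0).color = BWG.black := by
  have h13 := C.L13; have hw := C.hw; have hh := C.hh
  have hc := C.colSuper (x := 0) (y := 0) (i := 1) (j := 1) (X := 0) (Y := 0)
    (by omega) (by omega) (by omega) (by omega) (by omega) (by omega) (by omega) (by omega)
  rw [hc]
  exact C.sp_int (by omega) (by omega) (by omega) (by omega)

lemma blackEq {X Y : ℕ} (rX : X < ℓ * w + 2) (rY : Y < ℓ * h + 2)
    (hc : (f X Y).color = BWG.black) : f X Y = f 0 0 := by
  have m1 : f X Y ∈ Θ.tiles.filter (fun t => t.color = BWG.black) :=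
    Finset.mem_filter.2 ⟨C.mem _ _ rX rY, hc⟩
  have m2 : f 0 0 ∈ Θ.tiles.filter (fun t => t.color = BWG.black) :=
    Finset.mem_filter.2 ⟨C.mem _ _ (by omega) (by omega), C.black00⟩
  exact Finset.card_le_one.1 C.hblack _ m1 _ m2

lemma bNS : (f 0 0).north = (f 0 0).south := by
  have h13 := C.L13; have hw := C.hw; have hh := C.hh
  have hb : (f 0 1).color = BWG.black := by
    have hc := C.colSuper (x := 0) (y := 0) (i := 1) (j := 2) (X := 0) (Y := 1)
      (by omega) (by omega) (by omega) (by omega) (by omega) (by omega) (by omega) (by omega)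
    rw [hc]
    exact C.sp_int (by omega) (by omega) (by omega) (by omega)
  have he : f 0 1 = f 0 0 := C.blackEq (by omega) (by omega) hb
  have hs := C.hS 0 0 (by omega) (by omega)
  rw [he] at hs
  exact hs.symm

lemma bEW : (f 0 0).east = (f 0 0).west := by
  have h13 := C.L13; have hw := C.hw; have hh := C.hh
  have hb : (f 1 0).color = BWG.black := by
    have hc := C.colSuper (x := 0) (y := 0) (i := 2) (j := 1) (X := 1) (Y := 0)
      (by omega) (by omega) (by omega) (by omega) (by omega) (by omega) (by omega) (by omega)
    rw [hc]
    exact C.sp_int (by omega) (by omega) (by omega) (by omega)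
  have he : f 1 0 = f 0 0 := C.blackEq (by omega) (by omega) hb
  have hs := C.hW 0 0 (by omega) (by omega)
  rw [he] at hs
  exact hs.symm

lemma sβ_top {x y i X Y : ℕ} (hx : x < w) (hy : y < h) (h1 : 1 ≤ i) (h2 : i ≤ ℓ - 2)
    (eX : X = x * ℓ + i - 1) (eY : Y = y * ℓ + ℓ - 2) :
    (f X Y).south = (f 0 0).south := by
  subst eX; subst eY
  have h13 := C.L13
  have hxb := C.mulb hx; have hyb := C.mulb hy
  rw [C.sG (by omega) (by omega) (by omega)]
  have hbl : (f (x * ℓ + i - 1) (y * ℓ + ℓ - 2 - 1)).color = BWG.black := by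
    rw [C.colSuper hx hy (show i < ℓ by omega) (show ℓ - 2 < ℓ by omega) (by omega) (by omega)
      rfl (by omega)]
    exact C.sp_int h1 h2 (by omega) (by omega)
  rw [C.blackEq (by omega) (by omega) hbl, C.bNS]

lemma sβ_R2 {X Y : ℕ} (hX : X + 1 < ℓ * w) (hm : (X + 1) % ℓ ≠ ℓ - 1) (eY : Y = ℓ * h) :
    (f X Y).south = (f 0 0).south := by
  subst eY
  have h13 := C.L13; have lh := C.Lh
  rw [C.sG (by omega) (by omega) (by omega)]
  have hbl : (f X (ℓ * h - 1)).color = BWG.black := by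
    rw [C.col _ _ (by omega) (by omega), C.QPat_R1 hX, if_neg hm]
  rw [C.blackEq (by omega) (by omega) hbl, C.bNS]

lemma wγ_rcol {x y j X Y : ℕ} (hx : x < w) (hy : y < h) (h1 : 1 ≤ j) (h2 : j ≤ ℓ - 2)
    (eX : X = x * ℓ + ℓ - 2) (eY : Y = y * ℓ + j - 1) :
    (f X Y).west = (f 0 0).west := by
  subst eX; subst eY
  have h13 := C.L13
  have hxb := C.mulb hx; have hyb := C.mulb hy
  rw [C.wG (by omega) (by omega) (by omega)]
  have hbl : (f (x * ℓ + ℓ - 2 - 1) (y * ℓ + j - 1)).color = BWG.black := by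
    rw [C.colSuper hx hy (show ℓ - 2 < ℓ by omega) (show j < ℓ by omega) (by omega) (by omega)
      (by omega) rfl]
    exact C.sp_int (by omega) (by omega) h1 h2
  rw [C.blackEq (by omega) (by omega) hbl, C.bEW]

lemma wγ_C2 {Y X : ℕ} (hY : Y + 1 < ℓ * h) (hm : (Y + 1) % ℓ ≠ ℓ - 1) (eX : X = ℓ * w) :
    (f X Y).west = (f 0 0).west := by
  subst eX
  have h13 := C.L13; have lw := C.Lw
  rw [C.wG (by omega) (by omega) (by omega)]
  have hbl : (f (ℓ * w - 1) Y).color = BWG.black := by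
    rw [C.col _ _ (by omega) (by omega), C.QPat_C1 hY, if_neg hm]
  rw [C.blackEq (by omega) (by omega) hbl, C.bEW]

lemma colR2 {X : ℕ} (hX : X + 1 < ℓ * w) :
    (f X (ℓ * h)).color = if X = k then BWG.white else BWG.gray := by
  have lh := C.Lh; have h13 := C.L13
  rw [C.col _ _ (by omega) (by omega), C.QPat_R2 hX]

lemma colC2 {Y : ℕ} (hY : Y + 1 < ℓ * h) :
    (f (ℓ * w) Y).color = if Y = k then BWG.white else BWG.gray := by
  have lw := C.Lw
  rw [C.col _ _ (by omega) (by omega), C.QPat_C2 hY]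

lemma colTop {x y i X Y : ℕ} (hx : x < w) (hy : y < h) (h1 : 1 ≤ i) (h2 : i ≤ ℓ - 2)
    (eX : X = x * ℓ + i - 1) (eY : Y = y * ℓ + ℓ - 2) :
    (f X Y).color = if i = P x y + 1 then BWG.white else BWG.gray := by
  subst eX; subst eY
  have h13 := C.L13
  rw [C.colSuper hx hy (show i < ℓ by omega) (show ℓ - 1 < ℓ by omega) (by omega)
    (by have := C.mulb hy; omega) rfl (by omega)]
  exact C.sp_top h1 h2

lemma colRight {x y j X Y : ℕ} (hx : x < w) (hy : y < h) (h1 : 1 ≤ j) (h2 : j ≤ ℓ - 2)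
    (eX : X = x * ℓ + ℓ - 2) (eY : Y = y * ℓ + j - 1) :
    (f X Y).color = if j = P x y + 1 then BWG.white else BWG.gray := by
  subst eX; subst eY
  have h13 := C.L13
  rw [C.colSuper hx hy (show ℓ - 1 < ℓ by omega) (show j < ℓ by omega)
    (by have := C.mulb hx; omega) (by omega) (by omega) rfl]
  exact C.sp_right h1 h2

lemma colBotW {x y i X Y : ℕ} (hx : x < w) (hy : y < h) (hy1 : 1 ≤ y) (hi : i < ℓ)
    (h1 : 1 ≤ x * ℓ + i) (eX : X = x * ℓ + i - 1) (eY : Y = y * ℓ - 1) :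
    (f X Y).color = BWG.white := by
  subst eX; subst eY
  have h13 := C.L13; have hyp := C.mulpred hy1
  rw [C.colSuper hx hy hi (show 0 < ℓ by omega) h1 (by omega) rfl (by omega)]
  exact C.sp_bot _ _

lemma colLeftW {x y j X Y : ℕ} (hx : x < w) (hy : y < h) (hx1 : 1 ≤ x) (hj : j < ℓ)
    (h2 : 1 ≤ y * ℓ + j) (eX : X = x * ℓ - 1) (eY : Y = y * ℓ + j - 1) :
    (f X Y).color = BWG.white := by
  subst eX; subst eY
  have h13 := C.L13; have hxp := C.mulpred hx1
  rw [C.colSuper hx hy (show 0 < ℓ by omega) hj (by omega) h2 (by omega) rfl]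
  exact C.sp_left _ _

lemma colCorner {x y X Y : ℕ} (hx : x < w) (hy : y < h)
    (eX : X = x * ℓ + ℓ - 2) (eY : Y = y * ℓ + ℓ - 2) :
    (f X Y).color = BWG.gray := by
  subst eX; subst eY
  have h13 := C.L13
  rw [C.colSuper hx hy (show ℓ - 1 < ℓ by omega) (show ℓ - 1 < ℓ by omega)
    (by have := C.mulb hx; omega) (by have := C.mulb hy; omega) (by omega) (by omega)]
  exact C.sp_corner (C.hPhi x y hx hy)

lemma notBW {X Y : ℕ} (rX : X < ℓ * w + 2) (rY : Y < ℓ * h + 2)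
    (hs : (f X Y).south = (f 0 0).south) (hwe : (f X Y).west = (f 0 0).west) :
    (f X Y).color = BWG.black := by
  rw [C.keyEq rX rY (by omega) (by omega) hs hwe, C.black00]

lemma cmpRow {X Y X' Y' n : ℕ} (hX : X < ℓ * w + 2) (hX' : X' < ℓ * w + 2)
    (hY : Y < ℓ * h + 2) (hY' : Y' < ℓ * h + 2)
    (hv : ∀ m, 1 ≤ m → m ≤ n →
      (X + m < ℓ * w + 2 ∧ (f (X + m) Y).south = (f 0 0).south) ∧
      (X' + m < ℓ * w + 2 ∧ (f (X' + m) Y').south = (f 0 0).south))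
    (base : f X Y = f X' Y') : ∀ m, m ≤ n → f (X + m) Y = f (X' + m) Y' := by
  intro m
  induction m with
  | zero => intro _; exact base
  | succ i ih =>
    intro hm
    have hi := ih (by omega)
    obtain ⟨⟨r1, s1⟩, r2, s2⟩ := hv (i + 1) (by omega) hm
    have ri : X + i < ℓ * w + 2 := by
      rcases Nat.eq_zero_or_pos i with rfl | hpos
      · exact hX
      · exact (by omega : X + i < X + (i+1)).trans_le (by omega)
    have ri' : X' + i < ℓ * w + 2 := by
      rcases Nat.eq_zero_or_pos i with rfl | hpos
      · exact hX'
      · omega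
    refine C.keyEq r1 hY r2 hY' (by rw [s1, s2]) ?_
    have w1 := C.hW (X + i) Y r1 hY
    have w2 := C.hW (X' + i) Y' r2 hY'
    show (f (X + i + 1) Y).west = (f (X' + i + 1) Y').west
    rw [w1, w2, hi]

lemma cmpCol {X Y X' Y' n : ℕ} (hX : X < ℓ * w + 2) (hX' : X' < ℓ * w + 2)
    (hY : Y < ℓ * h + 2) (hY' : Y' < ℓ * h + 2)
    (hv : ∀ m, 1 ≤ m → m ≤ n →
      (Y + m < ℓ * h + 2 ∧ (f X (Y + m)).west = (f 0 0).west) ∧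
      (Y' + m < ℓ * h + 2 ∧ (f X' (Y' + m)).west = (f 0 0).west))
    (base : f X Y = f X' Y') : ∀ m, m ≤ n → f X (Y + m) = f X' (Y' + m) := by
  intro m
  induction m with
  | zero => intro _; exact base
  | succ i ih =>
    intro hm
    have hi := ih (by omega)
    obtain ⟨⟨r1, s1⟩, r2, s2⟩ := hv (i + 1) (by omega) hm
    refine C.keyEq hX r1 hX' r2 ?_ (by rw [s1, s2])
    have w1 := C.hS X (Y + i) hX r1
    have w2 := C.hS X' (Y' + i) hX' r2
    show (f X (Y + i + 1)).south = (f X' (Y' + i + 1)).south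
    rw [w1, w2, hi]

lemma alignTopR2 {x y i X' : ℕ} (hx : x < w) (hy : y < h) (h1 : 1 ≤ i) (h2 : i ≤ P x y)
    (hX' : X' ≤ k + 1) (heq : f (x * ℓ + i - 1) (y * ℓ + ℓ - 2) = f X' (ℓ * h)) :
    X' + (P x y + 1 - i) = k := by
  have h13 := C.L13; have hl := C.hl; have lw := C.Lw; have lh := C.Lh
  have hck := C.hPhi x y hx hy
  set c := P x y with hc
  have hxb := C.mulb hx; have hyb := C.mulb hy
  have hv : ∀ m, 1 ≤ m → m ≤ c + 1 - i →
      (x * ℓ + i - 1 + m < ℓ * w + 2 ∧ (f (x * ℓ + i - 1 + m) (y * ℓ + ℓ - 2)).south = (f 0 0).south) ∧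
      (X' + m < ℓ * w + 2 ∧ (f (X' + m) (ℓ * h)).south = (f 0 0).south) := by
    intro m hm1 hm2
    refine ⟨⟨by omega, C.sβ_top hx hy (show 1 ≤ i + m by omega) (show i + m ≤ ℓ - 2 by omega)
      (by omega) rfl⟩, ⟨by omega, C.sβ_R2 (show X' + m + 1 < ℓ * w by omega) ?_ rfl⟩⟩
    rw [Nat.mod_eq_of_lt (by omega)]; omega
  have hcmp := C.cmpRow (by omega) (by omega) (by omega) (by omega) hv heq (c + 1 - i) le_rfl
  have cl : (f (x * ℓ + i - 1 + (c + 1 - i)) (y * ℓ + ℓ - 2)).color = BWG.white := by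
    rw [C.colTop (i := c + 1) hx hy (by omega) (by omega)
      (show x * ℓ + i - 1 + (c + 1 - i) = x * ℓ + (c + 1) - 1 by omega) rfl, if_pos rfl]
  have cr := C.colR2 (X := X' + (c + 1 - i)) (by omega)
  rw [← hcmp, cl] at cr
  by_contra hne
  rw [if_neg (by omega)] at cr
  exact BWG.noConfusion cr

lemma alignRightC2 {x y j Y' : ℕ} (hx : x < w) (hy : y < h) (h1 : 1 ≤ j) (h2 : j ≤ P x y)
    (hY' : Y' ≤ k + 1) (heq : f (x * ℓ + ℓ - 2) (y * ℓ + j - 1) = f (ℓ * w) Y') :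
    Y' + (P x y + 1 - j) = k := by
  have h13 := C.L13; have hl := C.hl; have lw := C.Lw; have lh := C.Lh
  have hck := C.hPhi x y hx hy
  set c := P x y with hc
  have hxb := C.mulb hx; have hyb := C.mulb hy
  have hv : ∀ m, 1 ≤ m → m ≤ c + 1 - j →
      (y * ℓ + j - 1 + m < ℓ * h + 2 ∧ (f (x * ℓ + ℓ - 2) (y * ℓ + j - 1 + m)).west = (f 0 0).west) ∧
      (Y' + m < ℓ * h + 2 ∧ (f (ℓ * w) (Y' + m)).west = (f 0 0).west) := by
    intro m hm1 hm2
    refine ⟨⟨by omega, C.wγ_rcol hx hy (show 1 ≤ j + m by omega) (show j + m ≤ ℓ - 2 by omega)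
      rfl (by omega)⟩, ⟨by omega, C.wγ_C2 (show Y' + m + 1 < ℓ * h by omega) ?_ rfl⟩⟩
    rw [Nat.mod_eq_of_lt (by omega)]; omega
  have hcmp := C.cmpCol (by omega) (by omega) (by omega) (by omega) hv heq (c + 1 - j) le_rfl
  have cl : (f (x * ℓ + ℓ - 2) (y * ℓ + j - 1 + (c + 1 - j))).color = BWG.white := by
    rw [C.colRight (j := c + 1) hx hy (by omega) (by omega) rfl
      (show y * ℓ + j - 1 + (c + 1 - j) = y * ℓ + (c + 1) - 1 by omega), if_pos rfl]
  have cr := C.colC2 (Y := Y' + (c + 1 - j)) (by omega)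
  rw [← hcmp, cl] at cr
  by_contra hne
  rw [if_neg (by omega)] at cr
  exact BWG.noConfusion cr

lemma R2align {X₁ X₂ : ℕ} (h1 : X₁ ≤ k)
    (hval : ∀ m, m ≤ k - X₁ → X₂ + m + 1 < ℓ * w ∧ (1 ≤ m → (X₂ + m + 1) % ℓ ≠ ℓ - 1))
    (heq : f X₁ (ℓ * h) = f X₂ (ℓ * h)) : X₂ + (k - X₁) = k := by
  have h13 := C.L13; have hl := C.hl; have lw := C.Lw; have lh := C.Lh
  have hv : ∀ m, 1 ≤ m → m ≤ k - X₁ →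
      (X₁ + m < ℓ * w + 2 ∧ (f (X₁ + m) (ℓ * h)).south = (f 0 0).south) ∧
      (X₂ + m < ℓ * w + 2 ∧ (f (X₂ + m) (ℓ * h)).south = (f 0 0).south) := by
    intro m hm1 hm2
    have hv2 := hval m hm2
    refine ⟨⟨by omega, C.sβ_R2 (show X₁ + m + 1 < ℓ * w by omega) ?_ rfl⟩,
      ⟨by omega, C.sβ_R2 hv2.1 (hv2.2 hm1) rfl⟩⟩
    rw [Nat.mod_eq_of_lt (by omega)]; omega
  have hcmp := C.cmpRow (by omega) (by have := (hval 0 (by omega)).1; omega) (by omega) (by omega)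
    hv heq (k - X₁) le_rfl
  have cl : (f (X₁ + (k - X₁)) (ℓ * h)).color = BWG.white := by
    rw [show X₁ + (k - X₁) = k by omega, C.colR2 (by omega), if_pos rfl]
  have cr := C.colR2 (X := X₂ + (k - X₁)) (hval (k - X₁) le_rfl).1
  rw [← hcmp, cl] at cr
  by_contra hne
  rw [if_neg (by omega)] at cr
  exact BWG.noConfusion cr

lemma C2align {Y₁ Y₂ : ℕ} (h1 : Y₁ ≤ k)
    (hval : ∀ m, m ≤ k - Y₁ → Y₂ + m + 1 < ℓ * h ∧ (1 ≤ m → (Y₂ + m + 1) % ℓ ≠ ℓ - 1))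
    (heq : f (ℓ * w) Y₁ = f (ℓ * w) Y₂) : Y₂ + (k - Y₁) = k := by
  have h13 := C.L13; have hl := C.hl; have lw := C.Lw; have lh := C.Lh
  have hv : ∀ m, 1 ≤ m → m ≤ k - Y₁ →
      (Y₁ + m < ℓ * h + 2 ∧ (f (ℓ * w) (Y₁ + m)).west = (f 0 0).west) ∧
      (Y₂ + m < ℓ * h + 2 ∧ (f (ℓ * w) (Y₂ + m)).west = (f 0 0).west) := by
    intro m hm1 hm2
    have hv2 := hval m hm2
    refine ⟨⟨by omega, C.wγ_C2 (show Y₁ + m + 1 < ℓ * h by omega) ?_ rfl⟩,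
      ⟨by omega, C.wγ_C2 hv2.1 (hv2.2 hm1) rfl⟩⟩
    rw [Nat.mod_eq_of_lt (by omega)]; omega
  have hcmp := C.cmpCol (by omega) (by omega) (by omega) (by have := (hval 0 (by omega)).1; omega)
    hv heq (k - Y₁) le_rfl
  have cl : (f (ℓ * w) (Y₁ + (k - Y₁))).color = BWG.white := by
    rw [show Y₁ + (k - Y₁) = k by omega, C.colC2 (by omega), if_pos rfl]
  have cr := C.colC2 (Y := Y₂ + (k - Y₁)) (hval (k - Y₁) le_rfl).1
  rw [← hcmp, cl] at cr
  by_contra hne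
  rw [if_neg (by omega)] at cr
  exact BWG.noConfusion cr

end Ctx

namespace Ctx
open Finset
variable {G : Type} [DecidableEq G]
variable {k w h ℓ : ℕ} {P : ℕ → ℕ → ℕ} {Θ : RTAS BWG G} {f : ℕ → ℕ → Tile BWG G}
variable (C : Ctx k w h ℓ P Θ f)
include C

lemma cornerS_ne : (f (ℓ - 2) (ℓ - 2)).south ≠ (f 0 0).south := by
  intro hcon
  have h13 := C.L13; have hl := C.hl; have hwv := C.hw; have hhv := C.hh; have hk := C.hk
  have lw := C.Lw; have lh := C.Lh
  have hx0 : (0:ℕ) < w := by omega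
  have hy0 : (0:ℕ) < h := by omega
  set c := P 0 0 with hc
  have hc1 : 1 ≤ c := C.hPlo 0 0 hx0 hy0
  have hck : c ≤ k := C.hPhi 0 0 hx0 hy0
  have hS := C.sG (X := ℓ - 2) (Y := ℓ - 2) (by omega) (by omega) (by omega)
  have hN : (f (ℓ - 2) (ℓ - 3)).north = (f 0 0).south := by
    rw [show ℓ - 3 = ℓ - 2 - 1 by omega, ← hS]; exact hcon
  have maps : ∀ j ∈ Finset.Icc (c + 2) (ℓ - 2),
      f (ℓ - 2) (j - 1) ∈ Θ.tiles.filter (fun t => t.color = BWG.gray) := by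
    intro j hj
    rw [Finset.mem_Icc] at hj
    refine Finset.mem_filter.2 ⟨C.mem _ _ (by omega) (by omega), ?_⟩
    rw [C.colRight (x := 0) (y := 0) (j := j) hx0 hy0 (by omega) (by omega) (by omega) (by omega),
      if_neg (by omega)]
  have hlt : (Θ.tiles.filter (fun t => t.color = BWG.gray)).card < (Finset.Icc (c + 2) (ℓ - 2)).card := by
    rw [Nat.card_Icc]; have := C.hgray; omega
  obtain ⟨j₁, hj₁, j₂, hj₂, hne, heq⟩ := Finset.exists_ne_map_eq_of_card_lt_of_maps_to hlt maps
  rw [Finset.mem_Icc] at hj₁ hj₂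
  have key : ∀ a b : ℕ, c + 2 ≤ a → a < b → b ≤ ℓ - 2 → f (ℓ - 2) (a - 1) = f (ℓ - 2) (b - 1) → False := by
    intro a b ha hab hb hab2
    have hv : ∀ m, 1 ≤ m → m ≤ ℓ - 2 - b →
        (a - 1 + m < ℓ * h + 2 ∧ (f (ℓ - 2) (a - 1 + m)).west = (f 0 0).west) ∧
        (b - 1 + m < ℓ * h + 2 ∧ (f (ℓ - 2) (b - 1 + m)).west = (f 0 0).west) := by
      intro m hm1 hm2
      exact ⟨⟨by omega, C.wγ_rcol (x := 0) (y := 0) (j := a + m) hx0 hy0 (by omega) (by omega)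
        (by omega) (by omega)⟩, ⟨by omega, C.wγ_rcol (x := 0) (y := 0) (j := b + m) hx0 hy0
        (by omega) (by omega) (by omega) (by omega)⟩⟩
    have hcmp := C.cmpCol (by omega) (by omega) (by omega) (by omega) hv hab2 (ℓ - 2 - b) le_rfl
    set j₀ := a + (ℓ - 2 - b) with hj₀
    have hNj : (f (ℓ - 2) (j₀ - 1)).north = (f 0 0).south := by
      have e1 : a - 1 + (ℓ - 2 - b) = j₀ - 1 := by omega
      have e2 : b - 1 + (ℓ - 2 - b) = ℓ - 3 := by omega
      rw [e1, e2] at hcmp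
      rw [hcmp]; exact hN
    have hblk : (f (ℓ - 2) j₀).color = BWG.black := by
      refine C.notBW (by omega) (by omega) ?_ ?_
      · rw [C.sG (by omega) (by omega) (by omega), show j₀ - 1 = j₀ - 1 from rfl]
        exact hNj
      · exact C.wγ_rcol (x := 0) (y := 0) (j := j₀ + 1) hx0 hy0 (by omega) (by omega)
          (by omega) (by omega)
    have hgr : (f (ℓ - 2) j₀).color = BWG.gray := by
      rw [C.colRight (x := 0) (y := 0) (j := j₀ + 1) hx0 hy0 (by omega) (by omega)
        (by omega) (by omega), if_neg (by omega)]
    rw [hblk] at hgr; exact BWG.noConfusion hgr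
  rcases lt_or_gt_of_ne hne with hlt2 | hlt2
  · exact key j₁ j₂ (by omega) hlt2 (by omega) heq
  · exact key j₂ j₁ (by omega) hlt2 (by omega) heq.symm

lemma cornerW_ne : (f (ℓ - 2) (ℓ - 2)).west ≠ (f 0 0).west := by
  intro hcon
  have h13 := C.L13; have hl := C.hl; have hwv := C.hw; have hhv := C.hh; have hk := C.hk
  have lw := C.Lw; have lh := C.Lh
  have hx0 : (0:ℕ) < w := by omega
  have hy0 : (0:ℕ) < h := by omega
  set c := P 0 0 with hc
  have hc1 : 1 ≤ c := C.hPlo 0 0 hx0 hy0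
  have hck : c ≤ k := C.hPhi 0 0 hx0 hy0
  have hS := C.wG (X := ℓ - 2) (Y := ℓ - 2) (by omega) (by omega) (by omega)
  have hN : (f (ℓ - 3) (ℓ - 2)).east = (f 0 0).west := by
    rw [show ℓ - 3 = ℓ - 2 - 1 by omega, ← hS]; exact hcon
  have maps : ∀ i ∈ Finset.Icc (c + 2) (ℓ - 2),
      f (i - 1) (ℓ - 2) ∈ Θ.tiles.filter (fun t => t.color = BWG.gray) := by
    intro i hi
    rw [Finset.mem_Icc] at hi
    refine Finset.mem_filter.2 ⟨C.mem _ _ (by omega) (by omega), ?_⟩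
    rw [C.colTop (x := 0) (y := 0) (i := i) hx0 hy0 (by omega) (by omega) (by omega) (by omega),
      if_neg (by omega)]
  have hlt : (Θ.tiles.filter (fun t => t.color = BWG.gray)).card < (Finset.Icc (c + 2) (ℓ - 2)).card := by
    rw [Nat.card_Icc]; have := C.hgray; omega
  obtain ⟨j₁, hj₁, j₂, hj₂, hne, heq⟩ := Finset.exists_ne_map_eq_of_card_lt_of_maps_to hlt maps
  rw [Finset.mem_Icc] at hj₁ hj₂
  have key : ∀ a b : ℕ, c + 2 ≤ a → a < b → b ≤ ℓ - 2 → f (a - 1) (ℓ - 2) = f (b - 1) (ℓ - 2) → False := by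
    intro a b ha hab hb hab2
    have hv : ∀ m, 1 ≤ m → m ≤ ℓ - 2 - b →
        (a - 1 + m < ℓ * w + 2 ∧ (f (a - 1 + m) (ℓ - 2)).south = (f 0 0).south) ∧
        (b - 1 + m < ℓ * w + 2 ∧ (f (b - 1 + m) (ℓ - 2)).south = (f 0 0).south) := by
      intro m hm1 hm2
      exact ⟨⟨by omega, C.sβ_top (x := 0) (y := 0) (i := a + m) hx0 hy0 (by omega) (by omega)
        (by omega) (by omega)⟩, ⟨by omega, C.sβ_top (x := 0) (y := 0) (i := b + m) hx0 hy0
        (by omega) (by omega) (by omega) (by omega)⟩⟩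
    have hcmp := C.cmpRow (by omega) (by omega) (by omega) (by omega) hv hab2 (ℓ - 2 - b) le_rfl
    set j₀ := a + (ℓ - 2 - b) with hj₀
    have hNj : (f (j₀ - 1) (ℓ - 2)).east = (f 0 0).west := by
      have e1 : a - 1 + (ℓ - 2 - b) = j₀ - 1 := by omega
      have e2 : b - 1 + (ℓ - 2 - b) = ℓ - 3 := by omega
      rw [e1, e2] at hcmp
      rw [hcmp]; exact hN
    have hblk : (f j₀ (ℓ - 2)).color = BWG.black := by
      refine C.notBW (by omega) (by omega) ?_ ?_
      · exact C.sβ_top (x := 0) (y := 0) (i := j₀ + 1) hx0 hy0 (by omega) (by omega)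
          (by omega) (by omega)
      · rw [C.wG (by omega) (by omega) (by omega)]
        exact hNj
    have hgr : (f j₀ (ℓ - 2)).color = BWG.gray := by
      rw [C.colTop (x := 0) (y := 0) (i := j₀ + 1) hx0 hy0 (by omega) (by omega)
        (by omega) (by omega), if_neg (by omega)]
    rw [hblk] at hgr; exact BWG.noConfusion hgr
  rcases lt_or_gt_of_ne hne with hlt2 | hlt2
  · exact key j₁ j₂ (by omega) hlt2 (by omega) heq
  · exact key j₂ j₁ (by omega) hlt2 (by omega) heq.symm

lemma eps_ne_gamma : (f k (ℓ * h)).east ≠ (f 0 0).west := by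
  intro hcon
  have h13 := C.L13; have hl := C.hl; have lw := C.Lw; have lh := C.Lh
  have hblk : (f (k + 1) (ℓ * h)).color = BWG.black := by
    refine C.notBW (by omega) (by omega) ?_ ?_
    · refine C.sβ_R2 (by omega) ?_ rfl
      rw [Nat.mod_eq_of_lt (by omega)]; omega
    · rw [C.wG (by omega) (by omega) (by omega)]
      exact hcon
  have hgr : (f (k + 1) (ℓ * h)).color = BWG.gray := by
    rw [C.colR2 (by omega), if_neg (by omega)]
  rw [hblk] at hgr; exact BWG.noConfusion hgr

lemma eta_ne_beta : (f (ℓ * w) k).north ≠ (f 0 0).south := by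
  intro hcon
  have h13 := C.L13; have hl := C.hl; have lw := C.Lw; have lh := C.Lh
  have hblk : (f (ℓ * w) (k + 1)).color = BWG.black := by
    refine C.notBW (by omega) (by omega) ?_ ?_
    · rw [C.sG (by omega) (by omega) (by omega)]
      show (f (ℓ * w) (k + 1 - 1)).north = _
      rw [show k + 1 - 1 = k from rfl]
      exact hcon
    · refine C.wγ_C2 (by omega) ?_ rfl
      rw [Nat.mod_eq_of_lt (by omega)]; omega
  have hgr : (f (ℓ * w) (k + 1)).color = BWG.gray := by
    rw [C.colC2 (by omega), if_neg (by omega)]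
  rw [hblk] at hgr; exact BWG.noConfusion hgr

lemma nGG {d e : ℕ} (hd : 1 ≤ d) (hd2 : d ≤ k) (he : 1 ≤ e) (he2 : e ≤ k)
    (heq : f (k - d) (ℓ * h) = f (k - e) (ℓ * h)) : d = e := by
  have h13 := C.L13; have hl := C.hl; have lw := C.Lw
  have := C.R2align (X₁ := k - d) (X₂ := k - e) (by omega) ?_ heq
  · omega
  · intro m hm
    refine ⟨by omega, fun h1 => ?_⟩
    rw [Nat.mod_eq_of_lt (by omega)]; omega

lemma nHH {d e : ℕ} (hd : 1 ≤ d) (hd2 : d ≤ k) (he : 1 ≤ e) (he2 : e ≤ k)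
    (heq : f (ℓ * w) (k - d) = f (ℓ * w) (k - e)) : d = e := by
  have h13 := C.L13; have hl := C.hl; have lh := C.Lh
  have := C.C2align (Y₁ := k - d) (Y₂ := k - e) (by omega) ?_ heq
  · omega
  · intro m hm
    refine ⟨by omega, fun h1 => ?_⟩
    rw [Nat.mod_eq_of_lt (by omega)]; omega

lemma sβG {d : ℕ} (hd : d ≤ k) : (f (k - d) (ℓ * h)).south = (f 0 0).south := by
  have h13 := C.L13; have hl := C.hl; have lw := C.Lw
  refine C.sβ_R2 (by omega) ?_ rfl
  rw [Nat.mod_eq_of_lt (by omega)]; omega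

lemma sβEr : (f (k + 1) (ℓ * h)).south = (f 0 0).south := by
  have h13 := C.L13; have hl := C.hl; have lw := C.Lw
  refine C.sβ_R2 (by omega) ?_ rfl
  rw [Nat.mod_eq_of_lt (by omega)]; omega

lemma wγH {d : ℕ} (hd : d ≤ k) : (f (ℓ * w) (k - d)).west = (f 0 0).west := by
  have h13 := C.L13; have hl := C.hl; have lh := C.Lh
  refine C.wγ_C2 (by omega) ?_ rfl
  rw [Nat.mod_eq_of_lt (by omega)]; omega

lemma wγEc : (f (ℓ * w) (k + 1)).west = (f 0 0).west := by
  have h13 := C.L13; have hl := C.hl; have lh := C.Lh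
  refine C.wγ_C2 (by omega) ?_ rfl
  rw [Nat.mod_eq_of_lt (by omega)]; omega

end Ctx

namespace Ctx
open Finset
variable {G : Type} [DecidableEq G]
variable {k w h ℓ : ℕ} {P : ℕ → ℕ → ℕ} {Θ : RTAS BWG G} {f : ℕ → ℕ → Tile BWG G}
variable (C : Ctx k w h ℓ P Θ f)
include C

lemma bwContra {X Y : ℕ} (rX : X < ℓ * w + 2) (rY : Y < ℓ * h + 2)
    (hs : (f X Y).south = (f 0 0).south) (hwe : (f X Y).west = (f 0 0).west)
    (hgr : (f X Y).color = BWG.gray) : False := by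
  have := C.notBW rX rY hs hwe
  rw [this] at hgr
  exact BWG.noConfusion hgr

lemma cG {d : ℕ} (h1 : 1 ≤ d) (h2 : d ≤ k) : (f (k - d) (ℓ * h)).color = BWG.gray := by
  have h13 := C.L13; have hl := C.hl; have lw := C.Lw
  rw [C.colR2 (by omega), if_neg (by omega)]

lemma cH {d : ℕ} (h1 : 1 ≤ d) (h2 : d ≤ k) : (f (ℓ * w) (k - d)).color = BWG.gray := by
  have h13 := C.L13; have hl := C.hl; have lh := C.Lh
  rw [C.colC2 (by omega), if_neg (by omega)]

lemma cEr : (f (k + 1) (ℓ * h)).color = BWG.gray := by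
  have h13 := C.L13; have hl := C.hl; have lw := C.Lw
  rw [C.colR2 (by omega), if_neg (by omega)]

lemma cEc : (f (ℓ * w) (k + 1)).color = BWG.gray := by
  have h13 := C.L13; have hl := C.hl; have lh := C.Lh
  rw [C.colC2 (by omega), if_neg (by omega)]

lemma ccS : (f (ℓ - 2) (ℓ - 2)).color = BWG.gray := by
  have h13 := C.L13; have hwv := C.hw; have hhv := C.hh
  exact C.colCorner (x := 0) (y := 0) (by omega) (by omega) (by omega) (by omega)

lemma hGH {d e : ℕ} (hd1 : 1 ≤ d) (hd2 : d ≤ k) (he1 : 1 ≤ e) (he2 : e ≤ k) :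
    f (k - d) (ℓ * h) ≠ f (ℓ * w) (k - e) := by
  intro heq
  have h13 := C.L13; have hl := C.hl; have lw := C.Lw
  exact C.bwContra (by omega) (by omega) (C.sβG hd2) (by rw [heq]; exact C.wγH he2)
    (C.cG hd1 hd2)

lemma hGEr {d : ℕ} (hd1 : 1 ≤ d) (hd2 : d ≤ k) : f (k - d) (ℓ * h) ≠ f (k + 1) (ℓ * h) := by
  intro heq
  have h13 := C.L13; have hl := C.hl; have lw := C.Lw
  have := C.R2align (X₁ := k - d) (X₂ := k + 1) (by omega) ?_ heq
  · omega
  · intro m hm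
    refine ⟨by omega, fun h1 => ?_⟩
    rw [Nat.mod_eq_of_lt (by omega)]; omega

lemma hGEc {d : ℕ} (hd1 : 1 ≤ d) (hd2 : d ≤ k) : f (k - d) (ℓ * h) ≠ f (ℓ * w) (k + 1) := by
  intro heq
  have h13 := C.L13; have hl := C.hl; have lw := C.Lw
  exact C.bwContra (by omega) (by omega) (C.sβG hd2) (by rw [heq]; exact C.wγEc) (C.cG hd1 hd2)

lemma hGcS {d : ℕ} (hd1 : 1 ≤ d) (hd2 : d ≤ k) : f (k - d) (ℓ * h) ≠ f (ℓ - 2) (ℓ - 2) := by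
  intro heq
  exact C.cornerS_ne (by rw [← heq]; exact C.sβG hd2)

lemma hHEr {e : ℕ} (he1 : 1 ≤ e) (he2 : e ≤ k) : f (k + 1) (ℓ * h) ≠ f (ℓ * w) (k - e) := by
  intro heq
  have h13 := C.L13; have hl := C.hl; have lw := C.Lw; have lh := C.Lh
  exact C.bwContra (by omega) (by omega) C.sβEr (by rw [heq]; exact C.wγH he2) C.cEr

lemma hHEc {e : ℕ} (he1 : 1 ≤ e) (he2 : e ≤ k) : f (ℓ * w) (k - e) ≠ f (ℓ * w) (k + 1) := by
  intro heq
  have h13 := C.L13; have hl := C.hl; have lh := C.Lh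
  have := C.C2align (Y₁ := k - e) (Y₂ := k + 1) (by omega) ?_ heq
  · omega
  · intro m hm
    refine ⟨by omega, fun h1 => ?_⟩
    rw [Nat.mod_eq_of_lt (by omega)]; omega

lemma hHcS {e : ℕ} (he1 : 1 ≤ e) (he2 : e ≤ k) : f (ℓ * w) (k - e) ≠ f (ℓ - 2) (ℓ - 2) := by
  intro heq
  exact C.cornerW_ne (by rw [← heq]; exact C.wγH he2)

lemma hErEc : f (k + 1) (ℓ * h) ≠ f (ℓ * w) (k + 1) := by
  intro heq
  have h13 := C.L13; have hl := C.hl; have lw := C.Lw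
  exact C.bwContra (by omega) (by omega) C.sβEr (by rw [heq]; exact C.wγEc) C.cEr

lemma hErcS : f (k + 1) (ℓ * h) ≠ f (ℓ - 2) (ℓ - 2) := by
  intro heq
  exact C.cornerS_ne (by rw [← heq]; exact C.sβEr)

lemma hEccS : f (ℓ * w) (k + 1) ≠ f (ℓ - 2) (ℓ - 2) := by
  intro heq
  exact C.cornerW_ne (by rw [← heq]; exact C.wγEc)

lemma grayCases {X Y : ℕ} (rX : X < ℓ * w + 2) (rY : Y < ℓ * h + 2)
    (hgr : (f X Y).color = BWG.gray) :
    (∃ d, 1 ≤ d ∧ d ≤ k ∧ f X Y = f (k - d) (ℓ * h)) ∨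
    (∃ d, 1 ≤ d ∧ d ≤ k ∧ f X Y = f (ℓ * w) (k - d)) ∨
    f X Y = f (k + 1) (ℓ * h) ∨ f X Y = f (ℓ * w) (k + 1) ∨ f X Y = f (ℓ - 2) (ℓ - 2) := by
  classical
  have h13 := C.L13; have hl := C.hl; have lw := C.Lw; have lh := C.Lh
  set A : Finset (Tile BWG G) := (Finset.Icc 1 k).image (fun d => f (k - d) (ℓ * h)) with hA
  set B : Finset (Tile BWG G) := (Finset.Icc 1 k).image (fun d => f (ℓ * w) (k - d)) with hB
  set T : Finset (Tile BWG G) :=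
    {f (k + 1) (ℓ * h), f (ℓ * w) (k + 1), f (ℓ - 2) (ℓ - 2)} with hT
  have cA : A.card = k := by
    rw [hA, Finset.card_image_of_injOn, Nat.card_Icc]
    · omega
    · intro d hd e he heq
      rw [Finset.mem_coe, Finset.mem_Icc] at hd he
      exact C.nGG hd.1 hd.2 he.1 he.2 heq
  have cB : B.card = k := by
    rw [hB, Finset.card_image_of_injOn, Nat.card_Icc]
    · omega
    · intro d hd e he heq
      rw [Finset.mem_coe, Finset.mem_Icc] at hd he
      exact C.nHH hd.1 hd.2 he.1 he.2 heq
  have cT : T.card = 3 := by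
    rw [hT]
    rw [Finset.card_insert_of_notMem (by
      simp only [Finset.mem_insert, Finset.mem_singleton]
      push_neg
      exact ⟨C.hErEc, C.hErcS⟩)]
    rw [Finset.card_insert_of_notMem (by
      simp only [Finset.mem_singleton]
      exact C.hEccS)]
    rfl
  have dAB : Disjoint A B := by
    rw [Finset.disjoint_left]
    intro t htA htB
    rw [hA, Finset.mem_image] at htA
    rw [hB, Finset.mem_image] at htB
    obtain ⟨d, hd, hed⟩ := htA
    obtain ⟨e, he, hee⟩ := htB
    rw [Finset.mem_Icc] at hd he
    exact C.hGH hd.1 hd.2 he.1 he.2 (hed.trans hee.symm)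
  have dT : Disjoint (A ∪ B) T := by
    rw [Finset.disjoint_left]
    intro t htAB htT
    rw [hT] at htT
    simp only [Finset.mem_insert, Finset.mem_singleton] at htT
    rcases Finset.mem_union.1 htAB with htA | htB
    · rw [hA, Finset.mem_image] at htA
      obtain ⟨d, hd, hed⟩ := htA
      rw [Finset.mem_Icc] at hd
      rcases htT with rfl | rfl | rfl
      · exact C.hGEr hd.1 hd.2 hed
      · exact C.hGEc hd.1 hd.2 hed
      · exact C.hGcS hd.1 hd.2 hed
    · rw [hB, Finset.mem_image] at htB
      obtain ⟨e, he, hee⟩ := htB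
      rw [Finset.mem_Icc] at he
      rcases htT with rfl | rfl | rfl
      · exact C.hHEr he.1 he.2 hee.symm
      · exact C.hHEc he.1 he.2 hee
      · exact C.hHcS he.1 he.2 hee
  have cardFam : (A ∪ B ∪ T).card = 2 * k + 3 := by
    rw [Finset.card_union_of_disjoint dT, Finset.card_union_of_disjoint dAB, cA, cB, cT]
    omega
  have hsub : A ∪ B ∪ T ⊆ Θ.tiles.filter (fun t => t.color = BWG.gray) := by
    intro t ht
    rcases Finset.mem_union.1 ht with htAB | htT
    · rcases Finset.mem_union.1 htAB with htA | htB
      · rw [hA, Finset.mem_image] at htA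
        obtain ⟨d, hd, hed⟩ := htA
        rw [Finset.mem_Icc] at hd
        refine Finset.mem_filter.2 ⟨?_, ?_⟩
        · rw [← hed]; exact C.mem _ _ (by omega) (by omega)
        · rw [← hed]; exact C.cG hd.1 hd.2
      · rw [hB, Finset.mem_image] at htB
        obtain ⟨e, he, hee⟩ := htB
        rw [Finset.mem_Icc] at he
        refine Finset.mem_filter.2 ⟨?_, ?_⟩
        · rw [← hee]; exact C.mem _ _ (by omega) (by omega)
        · rw [← hee]; exact C.cH he.1 he.2
    · rw [hT] at htT
      simp only [Finset.mem_insert, Finset.mem_singleton] at htT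
      have hwv := C.hw; have hhv := C.hh
      rcases htT with rfl | rfl | rfl
      · exact Finset.mem_filter.2 ⟨C.mem _ _ (by omega) (by omega), C.cEr⟩
      · exact Finset.mem_filter.2 ⟨C.mem _ _ (by omega) (by omega), C.cEc⟩
      · exact Finset.mem_filter.2 ⟨C.mem _ _ (by omega) (by omega), C.ccS⟩
  have hfam : A ∪ B ∪ T = Θ.tiles.filter (fun t => t.color = BWG.gray) :=
    Finset.eq_of_subset_of_card_le hsub (by rw [cardFam]; exact C.hgray)
  have hmem : f X Y ∈ A ∪ B ∪ T := by
    rw [hfam]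
    exact Finset.mem_filter.2 ⟨C.mem _ _ rX rY, hgr⟩
  rcases Finset.mem_union.1 hmem with htAB | htT
  · rcases Finset.mem_union.1 htAB with htA | htB
    · rw [hA, Finset.mem_image] at htA
      obtain ⟨d, hd, hed⟩ := htA
      rw [Finset.mem_Icc] at hd
      exact Or.inl ⟨d, hd.1, hd.2, hed.symm⟩
    · rw [hB, Finset.mem_image] at htB
      obtain ⟨e, he, hee⟩ := htB
      rw [Finset.mem_Icc] at he
      exact Or.inr (Or.inl ⟨e, he.1, he.2, hee.symm⟩)
  · rw [hT] at htT
    simp only [Finset.mem_insert, Finset.mem_singleton] at htT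
    rcases htT with he | he | he
    · exact Or.inr (Or.inr (Or.inl he))
    · exact Or.inr (Or.inr (Or.inr (Or.inl he)))
    · exact Or.inr (Or.inr (Or.inr (Or.inr he)))

end Ctx

namespace Ctx
open Finset
variable {G : Type} [DecidableEq G]
variable {k w h ℓ : ℕ} {P : ℕ → ℕ → ℕ} {Θ : RTAS BWG G} {f : ℕ → ℕ → Tile BWG G}
variable (C : Ctx k w h ℓ P Θ f)
include C

/-- Top-row prefix tiles are the counting tiles `G_d`. -/
lemma Tpre {x y i : ℕ} (hx : x < w) (hy : y < h) (h1 : 1 ≤ i) (h2 : i ≤ P x y) :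
    f (x * ℓ + i - 1) (y * ℓ + ℓ - 2) = f (k - (P x y + 1 - i)) (ℓ * h) := by
  have h13 := C.L13; have hl := C.hl; have lw := C.Lw; have lh := C.Lh
  have hxb := C.mulb hx; have hyb := C.mulb hy
  have hck := C.hPhi x y hx hy
  set c := P x y with hcdef
  have hgr : (f (x * ℓ + i - 1) (y * ℓ + ℓ - 2)).color = BWG.gray := by
    rw [C.colTop hx hy h1 (by omega) rfl rfl, if_neg (by omega)]
  rcases C.grayCases (by omega) (by omega) hgr with
    ⟨d, hd1, hd2, he⟩ | ⟨d, hd1, hd2, he⟩ | he | he | he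
  · have hal := C.alignTopR2 hx hy h1 h2 (show k - d ≤ k + 1 by omega) he
    rw [he]
    congr 1
    omega
  · exact (C.bwContra (by omega) (by omega) (C.sβ_top hx hy h1 (by omega) rfl rfl)
      (by rw [he]; exact C.wγH hd2) hgr).elim
  · have hal := C.alignTopR2 hx hy h1 h2 le_rfl he
    exact absurd hal (by omega)
  · exact (C.bwContra (by omega) (by omega) (C.sβ_top hx hy h1 (by omega) rfl rfl)
      (by rw [he]; exact C.wγEc) hgr).elim
  · exact (C.cornerS_ne (by rw [← he]; exact C.sβ_top hx hy h1 (by omega) rfl rfl)).elim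

/-- Right-column prefix tiles are the counting tiles `H_d`. -/
lemma Hpre {x y j : ℕ} (hx : x < w) (hy : y < h) (h1 : 1 ≤ j) (h2 : j ≤ P x y) :
    f (x * ℓ + ℓ - 2) (y * ℓ + j - 1) = f (ℓ * w) (k - (P x y + 1 - j)) := by
  have h13 := C.L13; have hl := C.hl; have lw := C.Lw; have lh := C.Lh
  have hxb := C.mulb hx; have hyb := C.mulb hy
  have hck := C.hPhi x y hx hy
  set c := P x y with hcdef
  have hgr : (f (x * ℓ + ℓ - 2) (y * ℓ + j - 1)).color = BWG.gray := by
    rw [C.colRight hx hy h1 (by omega) rfl rfl, if_neg (by omega)]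
  rcases C.grayCases (by omega) (by omega) hgr with
    ⟨d, hd1, hd2, he⟩ | ⟨d, hd1, hd2, he⟩ | he | he | he
  · exact (C.bwContra (by omega) (by omega) (by rw [he]; exact C.sβG hd2)
      (C.wγ_rcol hx hy h1 (by omega) rfl rfl) hgr).elim
  · have hal := C.alignRightC2 hx hy h1 h2 (show k - d ≤ k + 1 by omega) he
    rw [he]
    congr 1
    omega
  · exact (C.bwContra (by omega) (by omega) (by rw [he]; exact C.sβEr)
      (C.wγ_rcol hx hy h1 (by omega) rfl rfl) hgr).elim
  · have hal := C.alignRightC2 hx hy h1 h2 le_rfl he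
    exact absurd hal (by omega)
  · exact (C.cornerW_ne (by rw [← he]; exact C.wγ_rcol hx hy h1 (by omega) rfl rfl)).elim

/-- Top-row counter white tile is the unique counter white `W★`. -/
lemma Tcnt {x y : ℕ} (hx : x < w) (hy : y < h) :
    f (x * ℓ + (P x y + 1) - 1) (y * ℓ + ℓ - 2) = f k (ℓ * h) := by
  have h13 := C.L13; have hl := C.hl; have lw := C.Lw; have lh := C.Lh
  have hxb := C.mulb hx; have hyb := C.mulb hy
  have hck := C.hPhi x y hx hy; have hc1 := C.hPlo x y hx hy
  set c := P x y with hcdef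
  refine C.keyEq (by omega) (by omega) (by omega) (by omega) ?_ ?_
  · rw [C.sβ_top hx hy (by omega) (by omega) rfl rfl,
      C.sβ_R2 (show k + 1 < ℓ * w by omega) (by rw [Nat.mod_eq_of_lt (by omega)]; omega) rfl]
  · have w1 := C.wG (X := x * ℓ + (c + 1) - 1) (Y := y * ℓ + ℓ - 2) (by omega) (by omega) (by omega)
    have w2 := C.wG (X := k) (Y := ℓ * h) (by omega) (by omega) (by omega)
    rw [w1, w2, show x * ℓ + (c + 1) - 1 - 1 = x * ℓ + c - 1 by omega,
      C.Tpre hx hy hc1 le_rfl, show k - (c + 1 - c) = k - 1 by omega]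

/-- Right-column counter white tile is the unique counter white `Ŵ★`. -/
lemma Hcnt {x y : ℕ} (hx : x < w) (hy : y < h) :
    f (x * ℓ + ℓ - 2) (y * ℓ + (P x y + 1) - 1) = f (ℓ * w) k := by
  have h13 := C.L13; have hl := C.hl; have lw := C.Lw; have lh := C.Lh
  have hxb := C.mulb hx; have hyb := C.mulb hy
  have hck := C.hPhi x y hx hy; have hc1 := C.hPlo x y hx hy
  set c := P x y with hcdef
  refine C.keyEq (by omega) (by omega) (by omega) (by omega) ?_ ?_
  · have s1 := C.sG (X := x * ℓ + ℓ - 2) (Y := y * ℓ + (c + 1) - 1) (by omega) (by omega) (by omega)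
    have s2 := C.sG (X := ℓ * w) (Y := k) (by omega) (by omega) (by omega)
    rw [s1, s2, show y * ℓ + (c + 1) - 1 - 1 = y * ℓ + c - 1 by omega,
      C.Hpre hx hy hc1 le_rfl, show k - (c + 1 - c) = k - 1 by omega]
  · rw [C.wγ_rcol hx hy (by omega) (by omega) rfl rfl,
      C.wγ_C2 (show k + 1 < ℓ * h by omega) (by rw [Nat.mod_eq_of_lt (by omega)]; omega) rfl]

/-- The filler tile `E_r` is a `Φ`-fixed point: its east glue equals `ε`. -/
lemma EEr : (f (k + 1) (ℓ * h)).east = (f k (ℓ * h)).east := by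
  have h13 := C.L13; have hl := C.hl; have lw := C.Lw; have lh := C.Lh
  have hgr : (f (k + 2) (ℓ * h)).color = BWG.gray := by
    rw [C.colR2 (by omega), if_neg (by omega)]
  have hsβ : (f (k + 2) (ℓ * h)).south = (f 0 0).south := by
    refine C.sβ_R2 (by omega) ?_ rfl
    rw [Nat.mod_eq_of_lt (by omega)]; omega
  have h22 : f (k + 2) (ℓ * h) = f (k + 1) (ℓ * h) := by
    rcases C.grayCases (by omega) (by omega) hgr with
      ⟨d, hd1, hd2, he⟩ | ⟨d, hd1, hd2, he⟩ | he | he | he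
    · exfalso
      have := C.R2align (X₁ := k - d) (X₂ := k + 2) (by omega) ?_ he.symm
      · omega
      · intro m hm
        refine ⟨by omega, fun hm1 => ?_⟩
        rw [Nat.mod_eq_of_lt (by omega)]; omega
    · exact (C.bwContra (by omega) (by omega) hsβ (by rw [he]; exact C.wγH hd2) hgr).elim
    · exact he
    · exact (C.bwContra (by omega) (by omega) hsβ (by rw [he]; exact C.wγEc) hgr).elim
    · exact (C.cornerS_ne (by rw [← he]; exact hsβ)).elim
  have hcon := congrArg Tile.west h22
  have w2 := C.wG (X := k + 2) (Y := ℓ * h) (by omega) (by omega) (by omega)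
  have w1 := C.wG (X := k + 1) (Y := ℓ * h) (by omega) (by omega) (by omega)
  rw [w2, w1] at hcon
  rwa [show k + 2 - 1 = k + 1 from rfl, show k + 1 - 1 = k from rfl] at hcon

/-- The north glue of `E_c` equals the north glue of `Ŵ★`. -/
lemma NEc : (f (ℓ * w) (k + 1)).north = (f (ℓ * w) k).north := by
  have h13 := C.L13; have hl := C.hl; have lw := C.Lw; have lh := C.Lh
  have hgr : (f (ℓ * w) (k + 2)).color = BWG.gray := by
    rw [C.colC2 (by omega), if_neg (by omega)]
  have hwγ : (f (ℓ * w) (k + 2)).west = (f 0 0).west := by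
    refine C.wγ_C2 (by omega) ?_ rfl
    rw [Nat.mod_eq_of_lt (by omega)]; omega
  have h22 : f (ℓ * w) (k + 2) = f (ℓ * w) (k + 1) := by
    rcases C.grayCases (by omega) (by omega) hgr with
      ⟨d, hd1, hd2, he⟩ | ⟨d, hd1, hd2, he⟩ | he | he | he
    · exact (C.bwContra (by omega) (by omega) (by rw [he]; exact C.sβG hd2) hwγ hgr).elim
    · exfalso
      have := C.C2align (Y₁ := k - d) (Y₂ := k + 2) (by omega) ?_ he.symm
      · omega
      · intro m hm
        refine ⟨by omega, fun hm1 => ?_⟩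
        rw [Nat.mod_eq_of_lt (by omega)]; omega
    · exact (C.bwContra (by omega) (by omega) (by rw [he]; exact C.sβEr) hwγ hgr).elim
    · exact he
    · exact (C.cornerW_ne (by rw [← he]; exact hwγ)).elim
  have hcon := congrArg Tile.south h22
  have s2 := C.sG (X := ℓ * w) (Y := k + 2) (by omega) (by omega) (by omega)
  have s1 := C.sG (X := ℓ * w) (Y := k + 1) (by omega) (by omega) (by omega)
  rw [s2, s1] at hcon
  rwa [show k + 2 - 1 = k + 1 from rfl, show k + 1 - 1 = k from rfl] at hcon

/-- The `R2` gadget row is constantly `E_r` after the white. -/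
lemma R2tail {X : ℕ} (hX1 : k + 1 ≤ X) (hX2 : X ≤ ℓ - 3) : f X (ℓ * h) = f (k + 1) (ℓ * h) := by
  have h13 := C.L13; have hl := C.hl; have lw := C.Lw; have lh := C.Lh
  induction X, hX1 using Nat.le_induction with
  | base => rfl
  | succ X hX ih =>
    have ihe := ih (by omega)
    refine C.keyEq (by omega) (by omega) (by omega) (by omega) ?_ ?_
    · rw [C.sβ_R2 (show X + 1 + 1 < ℓ * w by omega)
        (by rw [Nat.mod_eq_of_lt (by omega)]; omega) rfl, C.sβEr]
    · have w1 := C.hW X (ℓ * h) (by omega) (by omega)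
      have w2 := C.wG (X := k + 1) (Y := ℓ * h) (by omega) (by omega) (by omega)
      rw [w1, ihe, C.EEr, w2]
      rfl

/-- The `C2'` gadget column is constantly `E_c` after the white. -/
lemma C2tail {Y : ℕ} (hY1 : k + 1 ≤ Y) (hY2 : Y ≤ ℓ - 3) : f (ℓ * w) Y = f (ℓ * w) (k + 1) := by
  have h13 := C.L13; have hl := C.hl; have lw := C.Lw; have lh := C.Lh
  induction Y, hY1 using Nat.le_induction with
  | base => rfl
  | succ Y hY ih =>
    have ihe := ih (by omega)
    refine C.keyEq (by omega) (by omega) (by omega) (by omega) ?_ ?_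
    · have s1 := C.hS (ℓ * w) Y (by omega) (by omega)
      have s2 := C.sG (X := ℓ * w) (Y := k + 1) (by omega) (by omega) (by omega)
      rw [s1, ihe, C.NEc, s2]
      rfl
    · rw [C.wγ_C2 (show Y + 1 + 1 < ℓ * h by omega)
        (by rw [Nat.mod_eq_of_lt (by omega)]; omega) rfl, C.wγEc]

/-- Top-row tail tiles all equal `E_r`. -/
lemma Ttail {x y j : ℕ} (hx : x < w) (hy : y < h) (hj1 : P x y + 2 ≤ j) (hj2 : j ≤ ℓ - 2) :
    f (x * ℓ + j - 1) (y * ℓ + ℓ - 2) = f (k + 1) (ℓ * h) := by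
  have h13 := C.L13; have hl := C.hl; have lw := C.Lw; have lh := C.Lh
  have hxb := C.mulb hx; have hyb := C.mulb hy
  have hck := C.hPhi x y hx hy; have hc1 := C.hPlo x y hx hy
  induction j, hj1 using Nat.le_induction with
  | base =>
    refine C.keyEq (by omega) (by omega) (by omega) (by omega) ?_ ?_
    · rw [C.sβ_top hx hy (by omega) (by omega) rfl rfl, C.sβEr]
    · have w1 := C.wG (X := x * ℓ + (P x y + 2) - 1) (Y := y * ℓ + ℓ - 2)
        (by omega) (by omega) (by omega)
      have w2 := C.wG (X := k + 1) (Y := ℓ * h) (by omega) (by omega) (by omega)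
      rw [w1, w2, show x * ℓ + (P x y + 2) - 1 - 1 = x * ℓ + (P x y + 1) - 1 by omega,
        C.Tcnt hx hy, show k + 1 - 1 = k from rfl]
  | succ j hj ih =>
    have ihe := ih (by omega)
    refine C.keyEq (by omega) (by omega) (by omega) (by omega) ?_ ?_
    · rw [C.sβ_top hx hy (by omega) (by omega) rfl rfl, C.sβEr]
    · have w1 := C.wG (X := x * ℓ + (j + 1) - 1) (Y := y * ℓ + ℓ - 2)
        (by omega) (by omega) (by omega)
      have w2 := C.wG (X := k + 1) (Y := ℓ * h) (by omega) (by omega) (by omega)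
      rw [w1, w2, show x * ℓ + (j + 1) - 1 - 1 = x * ℓ + j - 1 by omega, ihe, C.EEr,
        show k + 1 - 1 = k from rfl]

/-- Right-column tail tiles all equal `E_c`. -/
lemma Ctail {x y j : ℕ} (hx : x < w) (hy : y < h) (hj1 : P x y + 2 ≤ j) (hj2 : j ≤ ℓ - 2) :
    f (x * ℓ + ℓ - 2) (y * ℓ + j - 1) = f (ℓ * w) (k + 1) := by
  have h13 := C.L13; have hl := C.hl; have lw := C.Lw; have lh := C.Lh
  have hxb := C.mulb hx; have hyb := C.mulb hy
  have hck := C.hPhi x y hx hy; have hc1 := C.hPlo x y hx hy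
  induction j, hj1 using Nat.le_induction with
  | base =>
    refine C.keyEq (by omega) (by omega) (by omega) (by omega) ?_ ?_
    · have s1 := C.sG (X := x * ℓ + ℓ - 2) (Y := y * ℓ + (P x y + 2) - 1)
        (by omega) (by omega) (by omega)
      have s2 := C.sG (X := ℓ * w) (Y := k + 1) (by omega) (by omega) (by omega)
      rw [s1, s2, show y * ℓ + (P x y + 2) - 1 - 1 = y * ℓ + (P x y + 1) - 1 by omega,
        C.Hcnt hx hy, show k + 1 - 1 = k from rfl]
    · rw [C.wγ_rcol hx hy (by omega) (by omega) rfl rfl, C.wγEc]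
  | succ j hj ih =>
    have ihe := ih (by omega)
    refine C.keyEq (by omega) (by omega) (by omega) (by omega) ?_ ?_
    · have s1 := C.sG (X := x * ℓ + ℓ - 2) (Y := y * ℓ + (j + 1) - 1)
        (by omega) (by omega) (by omega)
      have s2 := C.sG (X := ℓ * w) (Y := k + 1) (by omega) (by omega) (by omega)
      rw [s1, s2, show y * ℓ + (j + 1) - 1 - 1 = y * ℓ + j - 1 by omega, ihe, C.NEc,
        show k + 1 - 1 = k from rfl]
    · rw [C.wγ_rcol hx hy (by omega) (by omega) rfl rfl, C.wγEc]

/-- All supertile corners carry the same tile `c★`. -/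
lemma cornerEq {x y : ℕ} (hx : x < w) (hy : y < h) :
    f (x * ℓ + ℓ - 2) (y * ℓ + ℓ - 2) = f (ℓ - 2) (ℓ - 2) := by
  have h13 := C.L13; have hl := C.hl; have lw := C.Lw; have lh := C.Lh
  have hwv := C.hw; have hhv := C.hh
  have key : ∀ x' y', x' < w → y' < h →
      (f (x' * ℓ + ℓ - 2) (y' * ℓ + ℓ - 2)).south = (f (ℓ * w) (k + 1)).north ∧
      (f (x' * ℓ + ℓ - 2) (y' * ℓ + ℓ - 2)).west = (f (k + 1) (ℓ * h)).east := by
    intro x' y' hx' hy'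
    have hxb := C.mulb hx'; have hyb := C.mulb hy'
    have hck := C.hPhi x' y' hx' hy'
    constructor
    · rw [C.sG (by omega) (by omega) (by omega),
        show y' * ℓ + ℓ - 2 - 1 = y' * ℓ + (ℓ - 2) - 1 by omega,
        C.Ctail hx' hy' (by omega) le_rfl]
    · rw [C.wG (by omega) (by omega) (by omega),
        show x' * ℓ + ℓ - 2 - 1 = x' * ℓ + (ℓ - 2) - 1 by omega,
        C.Ttail hx' hy' (by omega) le_rfl]
  have k1 := key x y hx hy
  have k0 := key 0 0 (by omega) (by omega)
  rw [Nat.zero_mul, Nat.zero_add] at k0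
  have hxb := C.mulb hx; have hyb := C.mulb hy
  exact C.keyEq (by omega) (by omega) (by omega) (by omega)
    (k1.1.trans k0.1.symm) (k1.2.trans k0.2.symm)

end Ctx

namespace Ctx
open Finset
variable {G : Type} [DecidableEq G]
variable {k w h ℓ : ℕ} {P : ℕ → ℕ → ℕ} {Θ : RTAS BWG G} {f : ℕ → ℕ → Tile BWG G}
variable (C : Ctx k w h ℓ P Θ f)
include C

lemma ScS : (f (ℓ - 2) (ℓ - 2)).south = (f (ℓ * w) (k + 1)).north := by
  have h13 := C.L13; have hl := C.hl; have lw := C.Lw; have lh := C.Lh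
  have hwv := C.hw; have hhv := C.hh
  have hck := C.hPhi 0 0 (by omega) (by omega)
  have hc2 := C.Ctail (x := 0) (y := 0) (j := ℓ - 2) (by omega) (by omega) (by omega) le_rfl
  simp only [Nat.zero_mul, Nat.zero_add] at hc2
  rw [C.sG (by omega) (by omega) (by omega), show ℓ - 2 - 1 = ℓ - 2 - 1 from rfl, hc2]

lemma WcS : (f (ℓ - 2) (ℓ - 2)).west = (f (k + 1) (ℓ * h)).east := by
  have h13 := C.L13; have hl := C.hl; have lw := C.Lw; have lh := C.Lh
  have hwv := C.hw; have hhv := C.hh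
  have hck := C.hPhi 0 0 (by omega) (by omega)
  have hc2 := C.Ttail (x := 0) (y := 0) (j := ℓ - 2) (by omega) (by omega) (by omega) le_rfl
  simp only [Nat.zero_mul, Nat.zero_add] at hc2
  rw [C.wG (by omega) (by omega) (by omega), hc2]

lemma nuEta : (f (ℓ - 2) (ℓ - 2)).north = (f (ℓ * w) k).north ∧
    f (ℓ - 2) (ℓ * h) = f (ℓ - 2) (ℓ - 2) := by
  have h13 := C.L13; have hl := C.hl; have lw := C.Lw; have lh := C.Lh
  have hwv := C.hw; have hhv := C.hh; have hkk := C.hk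
  have hmh : (h - 1) * ℓ + ℓ = ℓ * h := by
    rw [C.mulpred C.hh]; exact Nat.mul_comm _ _
  have hcor := C.cornerEq (x := 0) (y := h - 1) (by omega) (by omega)
  rw [Nat.zero_mul, Nat.zero_add, show (h - 1) * ℓ + ℓ - 2 = ℓ * h - 2 by omega] at hcor
  have Sg : (f (ℓ - 2) (ℓ * h - 1)).south = (f (ℓ - 2) (ℓ - 2)).north := by
    rw [C.sG (by omega) (by omega) (by omega), show ℓ * h - 1 - 1 = ℓ * h - 2 by omega, hcor]
  have Wg : (f (ℓ - 2) (ℓ * h - 1)).west = (f 0 0).west := by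
    rw [C.wG (by omega) (by omega) (by omega)]
    have hbl : (f (ℓ - 2 - 1) (ℓ * h - 1)).color = BWG.black := by
      rw [C.col _ _ (by omega) (by omega), C.QPat_R1 (by omega), if_neg ?_]
      rw [show ℓ - 2 - 1 + 1 = ℓ - 2 by omega, Nat.mod_eq_of_lt (by omega)]; omega
    rw [C.blackEq (by omega) (by omega) hbl, C.bEW]
  have cg : (f (ℓ - 2) (ℓ * h - 1)).color = BWG.gray := by
    rw [C.col _ _ (by omega) (by omega), C.QPat_R1 (by omega), if_pos ?_]
    rw [show ℓ - 2 + 1 = ℓ - 1 by omega, Nat.mod_eq_of_lt (by omega)]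
  have hνβ : (f (ℓ - 2) (ℓ - 2)).north ≠ (f 0 0).south := by
    intro hcon
    exact C.bwContra (by omega) (by omega) (by rw [Sg]; exact hcon) Wg cg
  have hgHE : (∃ d, 1 ≤ d ∧ d ≤ k ∧ f (ℓ - 2) (ℓ * h - 1) = f (ℓ * w) (k - d)) ∨
      f (ℓ - 2) (ℓ * h - 1) = f (ℓ * w) (k + 1) := by
    rcases C.grayCases (by omega) (by omega) cg with
      ⟨d, hd1, hd2, he⟩ | hH | he | he | he
    · exact absurd (by rw [← Sg, he]; exact C.sβG hd2) hνβ
    · exact Or.inl hH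
    · exact absurd (by rw [← Sg, he]; exact C.sβEr) hνβ
    · exact Or.inr he
    · exact absurd (by rw [← C.EEr, ← C.WcS, ← he]; exact Wg) C.eps_ne_gamma
  have hNgβ : (f (ℓ - 2) (ℓ * h - 1)).north ≠ (f 0 0).south := by
    intro hcon
    rcases hgHE with ⟨d, hd1, hd2, he⟩ | he
    · have hblk := C.notBW (X := ℓ * w) (Y := k - d + 1) (by omega) (by omega)
        (by rw [C.sG (by omega) (by omega) (by omega), show k - d + 1 - 1 = k - d from rfl,
          ← he]; exact hcon)
        (C.wγ_C2 (by omega) (by rw [Nat.mod_eq_of_lt (by omega)]; omega) rfl)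
      have hcol2 := C.colC2 (Y := k - d + 1) (by omega)
      rw [hblk] at hcol2
      split_ifs at hcol2 <;> exact BWG.noConfusion hcol2
    · have hblk := C.notBW (X := ℓ * w) (Y := k + 2) (by omega) (by omega)
        (by rw [C.sG (by omega) (by omega) (by omega), show k + 2 - 1 = k + 1 from rfl,
          ← he]; exact hcon)
        (C.wγ_C2 (by omega) (by rw [Nat.mod_eq_of_lt (by omega)]; omega) rfl)
      have hcol2 := C.colC2 (Y := k + 2) (by omega)
      rw [hblk, if_neg (by omega)] at hcol2
      exact BWG.noConfusion hcol2
  have Sτ : (f (ℓ - 2) (ℓ * h)).south = (f (ℓ - 2) (ℓ * h - 1)).north := by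
    rw [C.sG (by omega) (by omega) (by omega)]
  have Wτ : (f (ℓ - 2) (ℓ * h)).west = (f (k + 1) (ℓ * h)).east := by
    rw [C.wG (by omega) (by omega) (by omega), show ℓ - 2 - 1 = ℓ - 3 by omega,
      C.R2tail (by omega) le_rfl]
  have cτ : (f (ℓ - 2) (ℓ * h)).color = BWG.gray := by
    rw [C.colR2 (by omega), if_neg (by omega)]
  have hτ : f (ℓ - 2) (ℓ * h) = f (ℓ - 2) (ℓ - 2) := by
    rcases C.grayCases (by omega) (by omega) cτ with
      ⟨d, hd1, hd2, he⟩ | ⟨d, hd1, hd2, he⟩ | he | he | he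
    · exact absurd (by rw [← Sτ, he]; exact C.sβG hd2) hNgβ
    · exact absurd (by rw [← C.EEr, ← Wτ, he]; exact C.wγH hd2) C.eps_ne_gamma
    · exact absurd (by rw [← Sτ, he]; exact C.sβEr) hNgβ
    · exact absurd (by rw [← C.EEr, ← Wτ, he]; exact C.wγEc) C.eps_ne_gamma
    · exact he
  have hScSNg : (f (ℓ - 2) (ℓ - 2)).south = (f (ℓ - 2) (ℓ * h - 1)).north := by
    rw [← congrArg Tile.south hτ]; exact Sτ
  rcases hgHE with ⟨d, hd1, hd2, he⟩ | he
  · exfalso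
    have hNH : (f (ℓ * w) (k - d)).north = (f (ℓ * w) (k + 1)).north := by
      rw [← he, ← hScSNg, C.ScS]
    have habove : f (ℓ * w) (k - d + 1) = f (ℓ * w) (k + 2) := by
      refine C.keyEq (by omega) (by omega) (by omega) (by omega) ?_ ?_
      · rw [C.sG (X := ℓ * w) (Y := k - d + 1) (by omega) (by omega) (by omega),
          C.sG (X := ℓ * w) (Y := k + 2) (by omega) (by omega) (by omega)]
        exact hNH
      · rw [C.wγ_C2 (by omega) (by rw [Nat.mod_eq_of_lt (by omega)]; omega) rfl,
          C.wγ_C2 (by omega) (by rw [Nat.mod_eq_of_lt (by omega)]; omega) rfl]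
    have h22 : f (ℓ * w) (k + 2) = f (ℓ * w) (k + 1) := C.C2tail (by omega) (by omega)
    have habove2 := habove.trans h22
    rcases Nat.eq_or_lt_of_le hd1 with h1d | h1d
    · have hcc := congrArg Tile.color habove2
      rw [show k - d + 1 = k by omega] at hcc
      rw [C.colC2 (Y := k) (by omega), if_pos rfl, C.cEc] at hcc
      exact BWG.noConfusion hcc
    · have e : k - d + 1 = k - (d - 1) := by omega
      rw [e] at habove2
      exact C.hHEc (by omega) (by omega) habove2
  · constructor
    · have hSEc : (f (ℓ * w) (k + 1)).south = (f (ℓ * w) k).north := by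
        rw [C.sG (by omega) (by omega) (by omega), show k + 1 - 1 = k by omega]
      rw [← Sg, he, hSEc]
    · exact hτ

lemma EcS : (f (ℓ - 2) (ℓ - 2)).east = (f k (ℓ * h)).east := by
  have h13 := C.L13; have hl := C.hl; have lw := C.Lw; have lh := C.Lh
  have hτ := (C.nuEta).2
  have w1 := C.wG (X := ℓ - 1) (Y := ℓ * h) (by omega) (by omega) (by omega)
  have cν : (f (ℓ - 1) (ℓ * h)).color = BWG.gray := by
    rw [C.colR2 (by omega), if_neg (by omega)]
  have hsβ : (f (ℓ - 1) (ℓ * h)).south = (f 0 0).south := by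
    refine C.sβ_R2 (by omega) ?_ rfl
    rw [show ℓ - 1 + 1 = ℓ by omega, Nat.mod_self]; omega
  have hEr : f (ℓ - 1) (ℓ * h) = f (k + 1) (ℓ * h) := by
    rcases C.grayCases (by omega) (by omega) cν with
      ⟨d, hd1, hd2, he⟩ | ⟨d, hd1, hd2, he⟩ | he | he | he
    · exfalso
      have := C.R2align (X₁ := k - d) (X₂ := ℓ - 1) (by omega) ?_ he.symm
      · omega
      · intro m hm
        refine ⟨by omega, fun hm1 => ?_⟩
        rw [show ℓ - 1 + m + 1 = ℓ + m by omega, Nat.add_mod_left, Nat.mod_eq_of_lt (by omega)]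
        omega
    · exact (C.bwContra (by omega) (by omega) hsβ (by rw [he]; exact C.wγH hd2) cν).elim
    · exact he
    · exact (C.bwContra (by omega) (by omega) hsβ (by rw [he]; exact C.wγEc) cν).elim
    · exact (C.cornerS_ne (by rw [← he]; exact hsβ)).elim
  have w2 := C.wG (X := k + 1) (Y := ℓ * h) (by omega) (by omega) (by omega)
  calc (f (ℓ - 2) (ℓ - 2)).east = (f (ℓ - 2) (ℓ * h)).east := (congrArg Tile.east hτ).symm
    _ = (f (ℓ - 1) (ℓ * h)).west := by rw [w1, show ℓ - 1 - 1 = ℓ - 2 by omega]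
    _ = (f (k + 1) (ℓ * h)).west := by rw [hEr]
    _ = (f k (ℓ * h)).east := by rw [w2, show k + 1 - 1 = k from rfl]

lemma NR2 {X : ℕ} (hX : X + 1 < ℓ * w) (hm : (X + 1) % ℓ ≠ ℓ - 1) :
    (f X (ℓ * h)).north = (f 0 0).south := by
  have h13 := C.L13; have lh := C.Lh
  have s3 := C.hS X (ℓ * h) (by omega) (by omega)
  have hbl : (f X (ℓ * h + 1)).color = BWG.black := by
    rw [C.col _ _ (by omega) (by omega), C.QPat_R3 hX, if_neg hm]
  rw [← s3, C.blackEq (by omega) (by omega) hbl]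

lemma EC2 {Y : ℕ} (hY : Y + 1 < ℓ * h) (hm : (Y + 1) % ℓ ≠ ℓ - 1) :
    (f (ℓ * w) Y).east = (f 0 0).west := by
  have h13 := C.L13; have lw := C.Lw
  have w3 := C.hW (ℓ * w) Y (by omega) (by omega)
  have hbl : (f (ℓ * w + 1) Y).color = BWG.black := by
    rw [C.col _ _ (by omega) (by omega), C.QPat_C3 hY, if_neg hm]
  rw [← w3, C.blackEq (by omega) (by omega) hbl]

/-- All top-row tiles of all supertiles emit `β` upward. -/
lemma Ntop {x y i : ℕ} (hx : x < w) (hy : y < h) (h1 : 1 ≤ i) (h2 : i ≤ ℓ - 2) :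
    (f (x * ℓ + i - 1) (y * ℓ + ℓ - 2)).north = (f 0 0).south := by
  have h13 := C.L13; have hl := C.hl; have lw := C.Lw; have lh := C.Lh
  have hck := C.hPhi x y hx hy; have hc1 := C.hPlo x y hx hy
  rcases Nat.lt_trichotomy i (P x y + 1) with hi | hi | hi
  · rw [C.Tpre hx hy h1 (by omega)]
    exact C.NR2 (by omega) (by rw [Nat.mod_eq_of_lt (by omega)]; omega)
  · rw [hi, C.Tcnt hx hy]
    exact C.NR2 (by omega) (by rw [Nat.mod_eq_of_lt (by omega)]; omega)
  · rw [C.Ttail hx hy (by omega) h2]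
    exact C.NR2 (by omega) (by rw [Nat.mod_eq_of_lt (by omega)]; omega)

/-- All right-column tiles of all supertiles emit `γ` to the right. -/
lemma Eright {x y j : ℕ} (hx : x < w) (hy : y < h) (h1 : 1 ≤ j) (h2 : j ≤ ℓ - 2) :
    (f (x * ℓ + ℓ - 2) (y * ℓ + j - 1)).east = (f 0 0).west := by
  have h13 := C.L13; have hl := C.hl; have lw := C.Lw; have lh := C.Lh
  have hck := C.hPhi x y hx hy; have hc1 := C.hPlo x y hx hy
  rcases Nat.lt_trichotomy j (P x y + 1) with hj | hj | hj
  · rw [C.Hpre hx hy h1 (by omega)]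
    exact C.EC2 (by omega) (by rw [Nat.mod_eq_of_lt (by omega)]; omega)
  · rw [hj, C.Hcnt hx hy]
    exact C.EC2 (by omega) (by rw [Nat.mod_eq_of_lt (by omega)]; omega)
  · rw [C.Ctail hx hy (by omega) h2]
    exact C.EC2 (by omega) (by rw [Nat.mod_eq_of_lt (by omega)]; omega)

/-- South glues of bottom-row tiles (positions `1 ≤ i ≤ ℓ-2`) are `β`. -/
lemma sβ_bot {x y i X Y : ℕ} (hx : x < w) (hy : y < h) (hy1 : 1 ≤ y) (h1 : 1 ≤ i)
    (h2 : i ≤ ℓ - 2) (eX : X = x * ℓ + i - 1) (eY : Y = y * ℓ - 1) :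
    (f X Y).south = (f 0 0).south := by
  subst eX; subst eY
  have h13 := C.L13
  have hxb := C.mulb hx; have hyb := C.mulb hy
  have hyp := C.mulpred hy1
  rw [C.sG (by omega) (by omega) (by omega),
    show y * ℓ - 1 - 1 = (y - 1) * ℓ + ℓ - 2 by omega]
  exact C.Ntop hx (by omega) h1 h2

/-- West glues of left-column tiles (positions `1 ≤ j ≤ ℓ-2`) are `γ`. -/
lemma wγ_lcol {x y j X Y : ℕ} (hx : x < w) (hy : y < h) (hx1 : 1 ≤ x) (h1 : 1 ≤ j)
    (h2 : j ≤ ℓ - 2) (eX : X = x * ℓ - 1) (eY : Y = y * ℓ + j - 1) :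
    (f X Y).west = (f 0 0).west := by
  subst eX; subst eY
  have h13 := C.L13
  have hxb := C.mulb hx; have hyb := C.mulb hy
  have hxp := C.mulpred hx1
  rw [C.wG (by omega) (by omega) (by omega),
    show x * ℓ - 1 - 1 = (x - 1) * ℓ + ℓ - 2 by omega]
  exact C.Eright (by omega) hy h1 h2

end Ctx

namespace Ctx
open Finset
variable {G : Type} [DecidableEq G]
variable {k w h ℓ : ℕ} {P : ℕ → ℕ → ℕ} {Θ : RTAS BWG G} {f : ℕ → ℕ → Tile BWG G}
variable (C : Ctx k w h ℓ P Θ f)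
include C

/-- North of the `B₁*` tile is `β`. -/
lemma NB1 {x y : ℕ} (hx : x < w) (hy : y < h) (hy1 : 1 ≤ y) :
    (f (x * ℓ + (ℓ - 2) - 1) (y * ℓ - 1)).north = (f 0 0).south := by
  have h13 := C.L13
  have hxb := C.mulb hx; have hyb := C.mulb hy; have hyp := C.mulpred hy1
  have hbl : (f (x * ℓ + (ℓ - 2) - 1) (y * ℓ)).color = BWG.black := by
    rw [C.colSuper (i := ℓ - 2) (j := 1) hx hy (by omega) (by omega) (by omega) (by omega)
      (by omega) (by omega)]
    exact C.sp_int (by omega) (by omega) (by omega) (by omega)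
  have hb2 := C.blackEq (by omega) (by omega) hbl
  have s := C.sG (X := x * ℓ + (ℓ - 2) - 1) (Y := y * ℓ) (by omega) (by omega) (by omega)
  rw [hb2] at s
  exact s.symm

/-- East of the `B₂*` tile is `γ`. -/
lemma EB2 {x y : ℕ} (hx : x < w) (hy : y < h) (hx1 : 1 ≤ x) :
    (f (x * ℓ - 1) (y * ℓ + (ℓ - 2) - 1)).east = (f 0 0).west := by
  have h13 := C.L13
  have hxb := C.mulb hx; have hyb := C.mulb hy; have hxp := C.mulpred hx1
  have hbl : (f (x * ℓ) (y * ℓ + (ℓ - 2) - 1)).color = BWG.black := by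
    rw [C.colSuper (i := 1) (j := ℓ - 2) hx hy (by omega) (by omega) (by omega) (by omega)
      (by omega) (by omega)]
    exact C.sp_int (by omega) (by omega) (by omega) (by omega)
  have hb2 := C.blackEq (by omega) (by omega) hbl
  have s := C.wG (X := x * ℓ) (Y := y * ℓ + (ℓ - 2) - 1) (by omega) (by omega) (by omega)
  rw [hb2] at s
  rw [show x * ℓ - 1 = x * ℓ - 1 from rfl]
  have : (f 0 0).west = (f (x * ℓ - 1) (y * ℓ + (ℓ - 2) - 1)).east := s
  exact this.symm

/-- South of the `C₁` tile is the north glue of the corner tile `c★`. -/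
lemma SC1 {x y : ℕ} (hx : x < w) (hy : y < h) (hy1 : 1 ≤ y) :
    (f (x * ℓ + (ℓ - 1) - 1) (y * ℓ - 1)).south = (f (ℓ - 2) (ℓ - 2)).north := by
  have h13 := C.L13
  have hxb := C.mulb hx; have hyb := C.mulb hy; have hyp := C.mulpred hy1
  rw [C.sG (by omega) (by omega) (by omega),
    show x * ℓ + (ℓ - 1) - 1 = x * ℓ + ℓ - 2 by omega,
    show y * ℓ - 1 - 1 = (y - 1) * ℓ + ℓ - 2 by omega,
    C.cornerEq hx (by omega)]

/-- West of the `C₂` tile is the east glue of the corner tile `c★`. -/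
lemma WC2 {x y : ℕ} (hx : x < w) (hy : y < h) (hx1 : 1 ≤ x) :
    (f (x * ℓ - 1) (y * ℓ + (ℓ - 1) - 1)).west = (f (ℓ - 2) (ℓ - 2)).east := by
  have h13 := C.L13
  have hxb := C.mulb hx; have hyb := C.mulb hy; have hxp := C.mulpred hx1
  rw [C.wG (by omega) (by omega) (by omega),
    show x * ℓ - 1 - 1 = (x - 1) * ℓ + ℓ - 2 by omega,
    show y * ℓ + (ℓ - 1) - 1 = y * ℓ + ℓ - 2 by omega,
    C.cornerEq (by omega) hy]

/-- The `Er` tile: south and west attributes. -/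
lemma SEr' : (f (k + 1) (ℓ * h)).west = (f k (ℓ * h)).east := by
  have h13 := C.L13; have hl := C.hl; have lw := C.Lw
  rw [C.wG (by omega) (by omega) (by omega), show k + 1 - 1 = k from rfl]

lemma SEc' : (f (ℓ * w) (k + 1)).south = (f (ℓ * w) k).north := by
  have h13 := C.L13; have hl := C.hl; have lh := C.Lh
  rw [C.sG (by omega) (by omega) (by omega), show k + 1 - 1 = k from rfl]

/-- corner tile attributes. -/
lemma ScS' : (f (ℓ - 2) (ℓ - 2)).south = (f (ℓ * w) k).north :=
  C.ScS.trans C.NEc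

lemma WcS' : (f (ℓ - 2) (ℓ - 2)).west = (f k (ℓ * h)).east :=
  C.WcS.trans C.EEr

/-- `C₁` determines the portrayed color. -/
lemma detC1 {x1 y1 x2 y2 : ℕ} (hx1 : x1 < w) (hy1 : y1 < h) (hx2 : x2 < w) (hy2 : y2 < h)
    (ha1 : 1 ≤ y1) (ha2 : 1 ≤ y2)
    (heq : f (x1 * ℓ + (ℓ - 1) - 1) (y1 * ℓ - 1) = f (x2 * ℓ + (ℓ - 1) - 1) (y2 * ℓ - 1)) :
    P x1 y1 = P x2 y2 := by
  have h13 := C.L13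
  have hb1 := C.mulb hx1; have hb2 := C.mulb hx2
  have hc1 := C.mulb hy1; have hc2 := C.mulb hy2
  have hp1 := C.mulpred ha1; have hp2 := C.mulpred ha2
  have hP1 := C.hPlo x1 y1 hx1 hy1; have hP2 := C.hPlo x2 y2 hx2 hy2
  have hQ1 := C.hPhi x1 y1 hx1 hy1; have hQ2 := C.hPhi x2 y2 hx2 hy2
  have r1eq : f (x1 * ℓ + ℓ - 2) (y1 * ℓ + 1 - 1) = f (x2 * ℓ + ℓ - 2) (y2 * ℓ + 1 - 1) := by
    refine C.keyEq (by omega) (by omega) (by omega) (by omega) ?_ ?_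
    · have s1 := C.sG (X := x1 * ℓ + ℓ - 2) (Y := y1 * ℓ + 1 - 1) (by omega) (by omega) (by omega)
      have s2 := C.sG (X := x2 * ℓ + ℓ - 2) (Y := y2 * ℓ + 1 - 1) (by omega) (by omega) (by omega)
      rw [s1, s2, show y1 * ℓ + 1 - 1 - 1 = y1 * ℓ - 1 by omega,
        show y2 * ℓ + 1 - 1 - 1 = y2 * ℓ - 1 by omega,
        show x1 * ℓ + ℓ - 2 = x1 * ℓ + (ℓ - 1) - 1 by omega,
        show x2 * ℓ + ℓ - 2 = x2 * ℓ + (ℓ - 1) - 1 by omega, heq]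
    · rw [C.wγ_rcol hx1 hy1 (by omega) (by omega) rfl rfl,
        C.wγ_rcol hx2 hy2 (by omega) (by omega) rfl rfl]
  rw [C.Hpre hx1 hy1 (by omega) hP1, C.Hpre hx2 hy2 (by omega) hP2] at r1eq
  have := C.nHH (d := P x1 y1 + 1 - 1) (e := P x2 y2 + 1 - 1) (by omega) (by omega)
    (by omega) (by omega) r1eq
  omega

/-- `C₂` determines the portrayed color. -/
lemma detC2 {x1 y1 x2 y2 : ℕ} (hx1 : x1 < w) (hy1 : y1 < h) (hx2 : x2 < w) (hy2 : y2 < h)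
    (ha1 : 1 ≤ x1) (ha2 : 1 ≤ x2)
    (heq : f (x1 * ℓ - 1) (y1 * ℓ + (ℓ - 1) - 1) = f (x2 * ℓ - 1) (y2 * ℓ + (ℓ - 1) - 1)) :
    P x1 y1 = P x2 y2 := by
  have h13 := C.L13
  have hb1 := C.mulb hx1; have hb2 := C.mulb hx2
  have hc1 := C.mulb hy1; have hc2 := C.mulb hy2
  have hp1 := C.mulpred ha1; have hp2 := C.mulpred ha2
  have hP1 := C.hPlo x1 y1 hx1 hy1; have hP2 := C.hPlo x2 y2 hx2 hy2
  have hQ1 := C.hPhi x1 y1 hx1 hy1; have hQ2 := C.hPhi x2 y2 hx2 hy2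
  have t1eq : f (x1 * ℓ + 1 - 1) (y1 * ℓ + ℓ - 2) = f (x2 * ℓ + 1 - 1) (y2 * ℓ + ℓ - 2) := by
    refine C.keyEq (by omega) (by omega) (by omega) (by omega) ?_ ?_
    · rw [C.sβ_top hx1 hy1 (by omega) (by omega) rfl rfl,
        C.sβ_top hx2 hy2 (by omega) (by omega) rfl rfl]
    · have w1 := C.wG (X := x1 * ℓ + 1 - 1) (Y := y1 * ℓ + ℓ - 2) (by omega) (by omega) (by omega)
      have w2 := C.wG (X := x2 * ℓ + 1 - 1) (Y := y2 * ℓ + ℓ - 2) (by omega) (by omega) (by omega)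
      rw [w1, w2, show x1 * ℓ + 1 - 1 - 1 = x1 * ℓ - 1 by omega,
        show x2 * ℓ + 1 - 1 - 1 = x2 * ℓ - 1 by omega,
        show y1 * ℓ + ℓ - 2 = y1 * ℓ + (ℓ - 1) - 1 by omega,
        show y2 * ℓ + ℓ - 2 = y2 * ℓ + (ℓ - 1) - 1 by omega, heq]
  rw [C.Tpre hx1 hy1 (by omega) hP1, C.Tpre hx2 hy2 (by omega) hP2] at t1eq
  have := C.nGG (d := P x1 y1 + 1 - 1) (e := P x2 y2 + 1 - 1) (by omega) (by omega)
    (by omega) (by omega) t1eq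
  omega

/-- The tile at `A` determines the tile at `B₁*`. -/
lemma AtoB1 {x1 y1 x2 y2 : ℕ} (hx1 : x1 < w) (hy1 : y1 < h) (hx2 : x2 < w) (hy2 : y2 < h)
    (hax1 : 1 ≤ x1) (hay1 : 1 ≤ y1) (hax2 : 1 ≤ x2) (hay2 : 1 ≤ y2)
    (heq : f (x1 * ℓ - 1) (y1 * ℓ - 1) = f (x2 * ℓ - 1) (y2 * ℓ - 1)) :
    f (x1 * ℓ + (ℓ - 2) - 1) (y1 * ℓ - 1) = f (x2 * ℓ + (ℓ - 2) - 1) (y2 * ℓ - 1) := by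
  have h13 := C.L13
  have hb1 := C.mulb hx1; have hb2 := C.mulb hx2
  have hc1 := C.mulb hy1; have hc2 := C.mulb hy2
  have hp1 := C.mulpred hax1; have hp2 := C.mulpred hax2
  have hv : ∀ m, 1 ≤ m → m ≤ ℓ - 2 →
      (x1 * ℓ - 1 + m < ℓ * w + 2 ∧ (f (x1 * ℓ - 1 + m) (y1 * ℓ - 1)).south = (f 0 0).south) ∧
      (x2 * ℓ - 1 + m < ℓ * w + 2 ∧ (f (x2 * ℓ - 1 + m) (y2 * ℓ - 1)).south = (f 0 0).south) := by
    intro m hm1 hm2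
    exact ⟨⟨by omega, C.sβ_bot hx1 hy1 hay1 (i := m) (by omega) (by omega) (by omega) rfl⟩,
      ⟨by omega, C.sβ_bot hx2 hy2 hay2 (i := m) (by omega) (by omega) (by omega) rfl⟩⟩
  have hcmp := C.cmpRow (by omega) (by omega) (by omega) (by omega) hv heq (ℓ - 2) le_rfl
  rw [show x1 * ℓ - 1 + (ℓ - 2) = x1 * ℓ + (ℓ - 2) - 1 by omega,
    show x2 * ℓ - 1 + (ℓ - 2) = x2 * ℓ + (ℓ - 2) - 1 by omega] at hcmp
  exact hcmp

/-- The tile at `B₁*` determines the tile at `C₁`. -/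
lemma B1toC1 {x1 y1 x2 y2 : ℕ} (hx1 : x1 < w) (hy1 : y1 < h) (hx2 : x2 < w) (hy2 : y2 < h)
    (hay1 : 1 ≤ y1) (hay2 : 1 ≤ y2)
    (heq : f (x1 * ℓ + (ℓ - 2) - 1) (y1 * ℓ - 1) = f (x2 * ℓ + (ℓ - 2) - 1) (y2 * ℓ - 1)) :
    f (x1 * ℓ + (ℓ - 1) - 1) (y1 * ℓ - 1) = f (x2 * ℓ + (ℓ - 1) - 1) (y2 * ℓ - 1) := by
  have h13 := C.L13
  have hb1 := C.mulb hx1; have hb2 := C.mulb hx2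
  have hc1 := C.mulb hy1; have hc2 := C.mulb hy2
  have hp1 := C.mulpred hay1; have hp2 := C.mulpred hay2
  refine C.keyEq (by omega) (by omega) (by omega) (by omega) ?_ ?_
  · rw [C.SC1 hx1 hy1 hay1, C.SC1 hx2 hy2 hay2]
  · have w1 := C.wG (X := x1 * ℓ + (ℓ - 1) - 1) (Y := y1 * ℓ - 1) (by omega) (by omega) (by omega)
    have w2 := C.wG (X := x2 * ℓ + (ℓ - 1) - 1) (Y := y2 * ℓ - 1) (by omega) (by omega) (by omega)
    rw [w1, w2, show x1 * ℓ + (ℓ - 1) - 1 - 1 = x1 * ℓ + (ℓ - 2) - 1 by omega,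
      show x2 * ℓ + (ℓ - 1) - 1 - 1 = x2 * ℓ + (ℓ - 2) - 1 by omega, heq]

/-- The tile at `A` determines the tile at `B₂*`. -/
lemma AtoB2 {x1 y1 x2 y2 : ℕ} (hx1 : x1 < w) (hy1 : y1 < h) (hx2 : x2 < w) (hy2 : y2 < h)
    (hax1 : 1 ≤ x1) (hay1 : 1 ≤ y1) (hax2 : 1 ≤ x2) (hay2 : 1 ≤ y2)
    (heq : f (x1 * ℓ - 1) (y1 * ℓ - 1) = f (x2 * ℓ - 1) (y2 * ℓ - 1)) :
    f (x1 * ℓ - 1) (y1 * ℓ + (ℓ - 2) - 1) = f (x2 * ℓ - 1) (y2 * ℓ + (ℓ - 2) - 1) := by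
  have h13 := C.L13
  have hb1 := C.mulb hx1; have hb2 := C.mulb hx2
  have hc1 := C.mulb hy1; have hc2 := C.mulb hy2
  have hp1 := C.mulpred hay1; have hp2 := C.mulpred hay2
  have hv : ∀ m, 1 ≤ m → m ≤ ℓ - 2 →
      (y1 * ℓ - 1 + m < ℓ * h + 2 ∧ (f (x1 * ℓ - 1) (y1 * ℓ - 1 + m)).west = (f 0 0).west) ∧
      (y2 * ℓ - 1 + m < ℓ * h + 2 ∧ (f (x2 * ℓ - 1) (y2 * ℓ - 1 + m)).west = (f 0 0).west) := by
    intro m hm1 hm2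
    exact ⟨⟨by omega, C.wγ_lcol hx1 hy1 hax1 (j := m) (by omega) (by omega) rfl (by omega)⟩,
      ⟨by omega, C.wγ_lcol hx2 hy2 hax2 (j := m) (by omega) (by omega) rfl (by omega)⟩⟩
  have hcmp := C.cmpCol (by omega) (by omega) (by omega) (by omega) hv heq (ℓ - 2) le_rfl
  rw [show y1 * ℓ - 1 + (ℓ - 2) = y1 * ℓ + (ℓ - 2) - 1 by omega,
    show y2 * ℓ - 1 + (ℓ - 2) = y2 * ℓ + (ℓ - 2) - 1 by omega] at hcmp
  exact hcmp

/-- The tile at `B₂*` determines the tile at `C₂`. -/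
lemma B2toC2 {x1 y1 x2 y2 : ℕ} (hx1 : x1 < w) (hy1 : y1 < h) (hx2 : x2 < w) (hy2 : y2 < h)
    (hax1 : 1 ≤ x1) (hax2 : 1 ≤ x2)
    (heq : f (x1 * ℓ - 1) (y1 * ℓ + (ℓ - 2) - 1) = f (x2 * ℓ - 1) (y2 * ℓ + (ℓ - 2) - 1)) :
    f (x1 * ℓ - 1) (y1 * ℓ + (ℓ - 1) - 1) = f (x2 * ℓ - 1) (y2 * ℓ + (ℓ - 1) - 1) := by
  have h13 := C.L13
  have hb1 := C.mulb hx1; have hb2 := C.mulb hx2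
  have hc1 := C.mulb hy1; have hc2 := C.mulb hy2
  have hp1 := C.mulpred hax1; have hp2 := C.mulpred hax2
  refine C.keyEq (by omega) (by omega) (by omega) (by omega) ?_ ?_
  · have s1 := C.sG (X := x1 * ℓ - 1) (Y := y1 * ℓ + (ℓ - 1) - 1) (by omega) (by omega) (by omega)
    have s2 := C.sG (X := x2 * ℓ - 1) (Y := y2 * ℓ + (ℓ - 1) - 1) (by omega) (by omega) (by omega)
    rw [s1, s2, show y1 * ℓ + (ℓ - 1) - 1 - 1 = y1 * ℓ + (ℓ - 2) - 1 by omega,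
      show y2 * ℓ + (ℓ - 1) - 1 - 1 = y2 * ℓ + (ℓ - 2) - 1 by omega, heq]
  · rw [C.WC2 hx1 hy1 hax1, C.WC2 hx2 hy2 hax2]

end Ctx

namespace Ctx
open Finset
variable {G : Type} [DecidableEq G]
variable {k w h ℓ : ℕ} {P : ℕ → ℕ → ℕ} {Θ : RTAS BWG G} {f : ℕ → ℕ → Tile BWG G}
variable (C : Ctx k w h ℓ P Θ f)
include C

/-- A tile cannot sit both at `A` and at `B₁*`. -/
lemma killAB1 {x1 y1 x2 y2 : ℕ} (hx1 : x1 < w) (hy1 : y1 < h) (hx2 : x2 < w) (hy2 : y2 < h)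
    (hax1 : 1 ≤ x1) (hay1 : 1 ≤ y1) (hay2 : 1 ≤ y2)
    (heq : f (x1 * ℓ - 1) (y1 * ℓ - 1) = f (x2 * ℓ + (ℓ - 2) - 1) (y2 * ℓ - 1)) : False := by
  have h13 := C.L13
  have hb1 := C.mulb hx1; have hc1 := C.mulb hy1
  have hp1 := C.mulpred hax1; have hq1 := C.mulpred hay1
  have hN : (f (x1 * ℓ - 1) (y1 * ℓ - 1)).north = (f 0 0).south := by
    rw [heq]; exact C.NB1 hx2 hy2 hay2
  have hblk : (f (x1 * ℓ - 1) (y1 * ℓ)).color = BWG.black := by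
    refine C.notBW (by omega) (by omega) ?_ ?_
    · rw [C.sG (X := x1 * ℓ - 1) (Y := y1 * ℓ) (by omega) (by omega) (by omega),
        show y1 * ℓ - 1 = y1 * ℓ - 1 from rfl]
      exact hN
    · exact C.wγ_lcol hx1 hy1 hax1 (j := 1) (by omega) (by omega) rfl (by omega)
  have hwh : (f (x1 * ℓ - 1) (y1 * ℓ)).color = BWG.white :=
    C.colLeftW hx1 hy1 hax1 (j := 1) (by omega) (by omega) rfl (by omega)
  rw [hblk] at hwh; exact BWG.noConfusion hwh

/-- A tile cannot sit both at `A` and at `C₁`. -/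
lemma killAC1 {x1 y1 x2 y2 : ℕ} (hx1 : x1 < w) (hy1 : y1 < h) (hx2 : x2 < w) (hy2 : y2 < h)
    (hax1 : 1 ≤ x1) (hay1 : 1 ≤ y1) (hay2 : 1 ≤ y2)
    (heq : f (x1 * ℓ - 1) (y1 * ℓ - 1) = f (x2 * ℓ + (ℓ - 1) - 1) (y2 * ℓ - 1)) : False := by
  have h13 := C.L13
  have hb1 := C.mulb hx1; have hc1 := C.mulb hy1
  have hb2 := C.mulb hx2; have hc2 := C.mulb hy2
  have hp1 := C.mulpred hax1; have hq1 := C.mulpred hay1; have hq2 := C.mulpred hay2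
  have hP2 := C.hPlo x2 y2 hx2 hy2
  have e12 : f (x1 * ℓ - 1) (y1 * ℓ) = f (x2 * ℓ + (ℓ - 1) - 1) (y2 * ℓ) := by
    refine C.keyEq (by omega) (by omega) (by omega) (by omega) ?_ ?_
    · have s1 := C.sG (X := x1 * ℓ - 1) (Y := y1 * ℓ) (by omega) (by omega) (by omega)
      have s2 := C.sG (X := x2 * ℓ + (ℓ - 1) - 1) (Y := y2 * ℓ) (by omega) (by omega) (by omega)
      rw [s1, s2, heq]
    · rw [C.wγ_lcol hx1 hy1 hax1 (j := 1) (by omega) (by omega) rfl (by omega),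
        C.wγ_rcol hx2 hy2 (j := 1) (by omega) (by omega)
          (show x2 * ℓ + (ℓ - 1) - 1 = x2 * ℓ + ℓ - 2 by omega)
          (show y2 * ℓ = y2 * ℓ + 1 - 1 by omega)]
  have hwh : (f (x1 * ℓ - 1) (y1 * ℓ)).color = BWG.white :=
    C.colLeftW hx1 hy1 hax1 (j := 1) (by omega) (by omega) rfl (by omega)
  have hgr : (f (x2 * ℓ + (ℓ - 1) - 1) (y2 * ℓ)).color = BWG.gray := by
    rw [C.colRight hx2 hy2 (j := 1) (by omega) (by omega) (by omega) (by omega),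
      if_neg (by omega)]
  rw [e12, hgr] at hwh; exact BWG.noConfusion hwh

/-- A tile cannot sit both at `B₁*` and at `C₁`. -/
lemma killB1C1 {x1 y1 x2 y2 : ℕ} (hx1 : x1 < w) (hy1 : y1 < h) (hx2 : x2 < w) (hy2 : y2 < h)
    (hay1 : 1 ≤ y1) (hay2 : 1 ≤ y2)
    (heq : f (x1 * ℓ + (ℓ - 2) - 1) (y1 * ℓ - 1) = f (x2 * ℓ + (ℓ - 1) - 1) (y2 * ℓ - 1)) :
    False := by
  have h13 := C.L13
  have hb2 := C.mulb hx2; have hc2 := C.mulb hy2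
  have hq2 := C.mulpred hay2
  have hP2 := C.hPlo x2 y2 hx2 hy2
  have hN : (f (x2 * ℓ + (ℓ - 1) - 1) (y2 * ℓ - 1)).north = (f 0 0).south := by
    rw [← heq]; exact C.NB1 hx1 hy1 hay1
  have hblk : (f (x2 * ℓ + (ℓ - 1) - 1) (y2 * ℓ)).color = BWG.black := by
    refine C.notBW (by omega) (by omega) ?_ ?_
    · rw [C.sG (X := x2 * ℓ + (ℓ - 1) - 1) (Y := y2 * ℓ) (by omega) (by omega) (by omega)]
      exact hN
    · exact C.wγ_rcol hx2 hy2 (j := 1) (by omega) (by omega) (by omega) (by omega)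
  have hgr : (f (x2 * ℓ + (ℓ - 1) - 1) (y2 * ℓ)).color = BWG.gray := by
    rw [C.colRight hx2 hy2 (j := 1) (by omega) (by omega) (by omega) (by omega),
      if_neg (by omega)]
  rw [hblk] at hgr; exact BWG.noConfusion hgr

/-- A tile cannot sit both at `A` and at `B₂*`. -/
lemma killAB2 {x1 y1 x2 y2 : ℕ} (hx1 : x1 < w) (hy1 : y1 < h) (hx2 : x2 < w) (hy2 : y2 < h)
    (hax1 : 1 ≤ x1) (hay1 : 1 ≤ y1) (hax2 : 1 ≤ x2)
    (heq : f (x1 * ℓ - 1) (y1 * ℓ - 1) = f (x2 * ℓ - 1) (y2 * ℓ + (ℓ - 2) - 1)) : False := by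
  have h13 := C.L13
  have hb1 := C.mulb hx1; have hc1 := C.mulb hy1
  have hp1 := C.mulpred hax1; have hq1 := C.mulpred hay1
  have hE : (f (x1 * ℓ - 1) (y1 * ℓ - 1)).east = (f 0 0).west := by
    rw [heq]; exact C.EB2 hx2 hy2 hax2
  have hblk : (f (x1 * ℓ) (y1 * ℓ - 1)).color = BWG.black := by
    refine C.notBW (by omega) (by omega) ?_ ?_
    · exact C.sβ_bot hx1 hy1 hay1 (i := 1) (by omega) (by omega) (by omega) rfl
    · rw [C.wG (X := x1 * ℓ) (Y := y1 * ℓ - 1) (by omega) (by omega) (by omega)]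
      exact hE
  have hwh : (f (x1 * ℓ) (y1 * ℓ - 1)).color = BWG.white :=
    C.colBotW hx1 hy1 hay1 (i := 1) (by omega) (by omega) (by omega) rfl
  rw [hblk] at hwh; exact BWG.noConfusion hwh

/-- A tile cannot sit both at `A` and at `C₂`. -/
lemma killAC2 {x1 y1 x2 y2 : ℕ} (hx1 : x1 < w) (hy1 : y1 < h) (hx2 : x2 < w) (hy2 : y2 < h)
    (hax1 : 1 ≤ x1) (hay1 : 1 ≤ y1) (hax2 : 1 ≤ x2)
    (heq : f (x1 * ℓ - 1) (y1 * ℓ - 1) = f (x2 * ℓ - 1) (y2 * ℓ + (ℓ - 1) - 1)) : False := by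
  have h13 := C.L13
  have hb1 := C.mulb hx1; have hc1 := C.mulb hy1
  have hb2 := C.mulb hx2; have hc2 := C.mulb hy2
  have hp1 := C.mulpred hax1; have hq1 := C.mulpred hay1; have hp2 := C.mulpred hax2
  have hP2 := C.hPlo x2 y2 hx2 hy2
  have e12 : f (x1 * ℓ) (y1 * ℓ - 1) = f (x2 * ℓ) (y2 * ℓ + (ℓ - 1) - 1) := by
    refine C.keyEq (by omega) (by omega) (by omega) (by omega) ?_ ?_
    · rw [C.sβ_bot hx1 hy1 hay1 (i := 1) (by omega) (by omega)
          (show x1 * ℓ = x1 * ℓ + 1 - 1 by omega) rfl,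
        C.sβ_top hx2 hy2 (i := 1) (by omega) (by omega)
          (show x2 * ℓ = x2 * ℓ + 1 - 1 by omega)
          (show y2 * ℓ + (ℓ - 1) - 1 = y2 * ℓ + ℓ - 2 by omega)]
    · have w1 := C.wG (X := x1 * ℓ) (Y := y1 * ℓ - 1) (by omega) (by omega) (by omega)
      have w2 := C.wG (X := x2 * ℓ) (Y := y2 * ℓ + (ℓ - 1) - 1) (by omega) (by omega) (by omega)
      rw [w1, w2, heq]
  have hwh : (f (x1 * ℓ) (y1 * ℓ - 1)).color = BWG.white :=
    C.colBotW hx1 hy1 hay1 (i := 1) (by omega) (by omega) (by omega) rfl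
  have hgr : (f (x2 * ℓ) (y2 * ℓ + (ℓ - 1) - 1)).color = BWG.gray := by
    rw [C.colTop hx2 hy2 (i := 1) (by omega) (by omega) (by omega) (by omega),
      if_neg (by omega)]
  rw [e12, hgr] at hwh; exact BWG.noConfusion hwh

/-- A tile cannot sit both at `B₂*` and at `C₂`. -/
lemma killB2C2 {x1 y1 x2 y2 : ℕ} (hx1 : x1 < w) (hy1 : y1 < h) (hx2 : x2 < w) (hy2 : y2 < h)
    (hax1 : 1 ≤ x1) (hax2 : 1 ≤ x2)
    (heq : f (x1 * ℓ - 1) (y1 * ℓ + (ℓ - 2) - 1) = f (x2 * ℓ - 1) (y2 * ℓ + (ℓ - 1) - 1)) :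
    False := by
  have h13 := C.L13
  have hb2 := C.mulb hx2; have hc2 := C.mulb hy2
  have hp2 := C.mulpred hax2
  have hP2 := C.hPlo x2 y2 hx2 hy2
  have hE : (f (x2 * ℓ - 1) (y2 * ℓ + (ℓ - 1) - 1)).east = (f 0 0).west := by
    rw [← heq]; exact C.EB2 hx1 hy1 hax1
  have hblk : (f (x2 * ℓ) (y2 * ℓ + (ℓ - 1) - 1)).color = BWG.black := by
    refine C.notBW (by omega) (by omega) ?_ ?_
    · exact C.sβ_top hx2 hy2 (i := 1) (by omega) (by omega) (by omega) (by omega)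
    · rw [C.wG (X := x2 * ℓ) (Y := y2 * ℓ + (ℓ - 1) - 1) (by omega) (by omega) (by omega)]
      exact hE
  have hgr : (f (x2 * ℓ) (y2 * ℓ + (ℓ - 1) - 1)).color = BWG.gray := by
    rw [C.colTop hx2 hy2 (i := 1) (by omega) (by omega) (by omega) (by omega),
      if_neg (by omega)]
  rw [hblk] at hgr; exact BWG.noConfusion hgr

/-- A tile cannot sit both at `B₁*` and at `B₂*`. -/
lemma killB1B2 {x1 y1 x2 y2 : ℕ} (hx1 : x1 < w) (hy1 : y1 < h) (hx2 : x2 < w) (hy2 : y2 < h)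
    (hay1 : 1 ≤ y1) (hax2 : 1 ≤ x2)
    (heq : f (x1 * ℓ + (ℓ - 2) - 1) (y1 * ℓ - 1) = f (x2 * ℓ - 1) (y2 * ℓ + (ℓ - 2) - 1)) :
    False := by
  have h13 := C.L13; have hl := C.hl; have lw := C.Lw; have lh := C.Lh
  have hb2 := C.mulb hx2; have hc2 := C.mulb hy2
  have hp2 := C.mulpred hax2
  have hErE : f (x2 * ℓ - 1) (y2 * ℓ + (ℓ - 1) - 1) = f (k + 1) (ℓ * h) := by
    refine C.keyEq (by omega) (by omega) (by omega) (by omega) ?_ ?_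
    · have s1 := C.sG (X := x2 * ℓ - 1) (Y := y2 * ℓ + (ℓ - 1) - 1) (by omega) (by omega) (by omega)
      rw [s1, show y2 * ℓ + (ℓ - 1) - 1 - 1 = y2 * ℓ + (ℓ - 2) - 1 by omega, ← heq,
        C.NB1 hx1 hy1 hay1, C.sβEr]
    · rw [C.WC2 hx2 hy2 hax2, C.SEr', C.EcS]
  have hwh : (f (x2 * ℓ - 1) (y2 * ℓ + (ℓ - 1) - 1)).color = BWG.white :=
    C.colLeftW hx2 hy2 hax2 (j := ℓ - 1) (by omega) (by omega) rfl rfl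
  rw [hErE, C.cEr] at hwh; exact BWG.noConfusion hwh

/-- A tile cannot sit both at `B₁*` and at `C₂`. -/
lemma killB1C2 {x1 y1 x2 y2 : ℕ} (hx1 : x1 < w) (hy1 : y1 < h) (hx2 : x2 < w) (hy2 : y2 < h)
    (hay1 : 1 ≤ y1) (hax2 : 1 ≤ x2)
    (heq : f (x1 * ℓ + (ℓ - 2) - 1) (y1 * ℓ - 1) = f (x2 * ℓ - 1) (y2 * ℓ + (ℓ - 1) - 1)) :
    False := by
  have h13 := C.L13; have hl := C.hl; have lw := C.Lw; have lh := C.Lh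
  have hb1 := C.mulb hx1; have hc1 := C.mulb hy1
  have hErE : f (x1 * ℓ + (ℓ - 2) - 1) (y1 * ℓ - 1) = f (k + 1) (ℓ * h) := by
    refine C.keyEq (by omega) (by omega) (by omega) (by omega) ?_ ?_
    · rw [C.sβ_bot hx1 hy1 hay1 (i := ℓ - 2) (by omega) (by omega) rfl rfl, C.sβEr]
    · rw [heq, C.WC2 hx2 hy2 hax2, C.SEr', C.EcS]
  have hwh : (f (x1 * ℓ + (ℓ - 2) - 1) (y1 * ℓ - 1)).color = BWG.white :=
    C.colBotW hx1 hy1 hay1 (i := ℓ - 2) (by omega) (by omega) rfl rfl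
  rw [hErE, C.cEr] at hwh; exact BWG.noConfusion hwh

/-- A tile cannot sit both at `C₁` and at `B₂*`. -/
lemma killC1B2 {x1 y1 x2 y2 : ℕ} (hx1 : x1 < w) (hy1 : y1 < h) (hx2 : x2 < w) (hy2 : y2 < h)
    (hay1 : 1 ≤ y1) (hax2 : 1 ≤ x2)
    (heq : f (x1 * ℓ + (ℓ - 1) - 1) (y1 * ℓ - 1) = f (x2 * ℓ - 1) (y2 * ℓ + (ℓ - 2) - 1)) :
    False := by
  have h13 := C.L13; have hl := C.hl; have lw := C.Lw; have lh := C.Lh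
  have hb1 := C.mulb hx1; have hc1 := C.mulb hy1
  have hEcE : f (x1 * ℓ + (ℓ - 1) - 1) (y1 * ℓ - 1) = f (ℓ * w) (k + 1) := by
    refine C.keyEq (by omega) (by omega) (by omega) (by omega) ?_ ?_
    · rw [C.SC1 hx1 hy1 hay1, (C.nuEta).1, C.SEc']
    · rw [heq, C.wγ_lcol hx2 hy2 hax2 (j := ℓ - 2) (by omega) (by omega) rfl rfl, C.wγEc]
  have hwh : (f (x1 * ℓ + (ℓ - 1) - 1) (y1 * ℓ - 1)).color = BWG.white :=
    C.colBotW hx1 hy1 hay1 (i := ℓ - 1) (by omega) (by omega) rfl rfl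
  rw [hEcE, C.cEc] at hwh; exact BWG.noConfusion hwh

/-- A tile cannot sit both at `C₁` and at `C₂`. -/
lemma killC1C2 {x1 y1 x2 y2 : ℕ} (hx1 : x1 < w) (hy1 : y1 < h) (hx2 : x2 < w) (hy2 : y2 < h)
    (hay1 : 1 ≤ y1) (hax2 : 1 ≤ x2)
    (heq : f (x1 * ℓ + (ℓ - 1) - 1) (y1 * ℓ - 1) = f (x2 * ℓ - 1) (y2 * ℓ + (ℓ - 1) - 1)) :
    False := by
  have h13 := C.L13; have hl := C.hl; have lw := C.Lw; have lh := C.Lh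
  have hb1 := C.mulb hx1; have hc1 := C.mulb hy1
  have hcSE : f (x1 * ℓ + (ℓ - 1) - 1) (y1 * ℓ - 1) = f (ℓ - 2) (ℓ - 2) := by
    refine C.keyEq (by omega) (by omega) (by omega) (by omega) ?_ ?_
    · rw [C.SC1 hx1 hy1 hay1, (C.nuEta).1, C.ScS']
    · rw [heq, C.WC2 hx2 hy2 hax2, C.WcS', C.EcS]
  have hwh : (f (x1 * ℓ + (ℓ - 1) - 1) (y1 * ℓ - 1)).color = BWG.white :=
    C.colBotW hx1 hy1 hay1 (i := ℓ - 1) (by omega) (by omega) rfl rfl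
  rw [hcSE, C.ccS] at hwh; exact BWG.noConfusion hwh

end Ctx
/-- Supertiles portraying different colors (resp. with different east outputs,
resp. with different north outputs) cannot share tile types in the positions
`K = {A, B₁*, B₂*, C₁, C₂}` (resp. `{A, B₁*, C₁}`, resp. `{A, B₂*, C₂}`); here
`A = (0,0)`, `B₁* = (ℓ-2, 0)`, `C₁ = (ℓ-1, 0)`, `B₂* = (0, ℓ-2)`, `C₂ = (0, ℓ-1)`
in inner coordinates. The statements hold for all available positions of
incomplete supertiles. -/
theorem supertiles_no_shared_tiles {G : Type} [DecidableEq G]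
    (k w h ℓ : ℕ) (P : ℕ → ℕ → ℕ) (hI : InI k w h P) (hℓ : ℓ = 5 * k + 8)
    (Θ : RTAS BWG G) (hD : DirectedTAS Θ)
    (hb : countColor Θ BWG.black ≤ 1)
    (hg : countColor Θ BWG.gray ≤ 2 * k + 3)
    (f : ℕ → ℕ → Tile BWG G)
    (hf : IsAssignment Θ (QW k w) (QH k h) f)
    (hcol : ∀ X < QW k w, ∀ Y < QH k h, (f X Y).color = QPat k w h P X Y) :
    ∀ x₁ y₁ x₂ y₂, x₁ < w → y₁ < h → x₂ < w → y₂ < h →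
      -- (i) different portrayed colors: no shared tile types in K
      (P x₁ y₁ ≠ P x₂ y₂ →
        ∀ p ∈ ([(0, 0), (ℓ - 2, 0), (ℓ - 1, 0), (0, ℓ - 2), (0, ℓ - 1)] :
            List (ℕ × ℕ)),
        ∀ q ∈ ([(0, 0), (ℓ - 2, 0), (ℓ - 1, 0), (0, ℓ - 2), (0, ℓ - 1)] :
            List (ℕ × ℕ)),
          availAt x₁ y₁ p → availAt x₂ y₂ q →
          f (x₁ * ℓ + p.1 - 1) (y₁ * ℓ + p.2 - 1)
            ≠ f (x₂ * ℓ + q.1 - 1) (y₂ * ℓ + q.2 - 1)) ∧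
      -- (ii) different east outputs: no shared tile types in A, B₁*, C₁
      (1 ≤ y₁ → 1 ≤ y₂ → stE ℓ f x₁ y₁ ≠ stE ℓ f x₂ y₂ →
        ∀ p ∈ ([(0, 0), (ℓ - 2, 0), (ℓ - 1, 0)] : List (ℕ × ℕ)),
        ∀ q ∈ ([(0, 0), (ℓ - 2, 0), (ℓ - 1, 0)] : List (ℕ × ℕ)),
          availAt x₁ y₁ p → availAt x₂ y₂ q →
          f (x₁ * ℓ + p.1 - 1) (y₁ * ℓ + p.2 - 1)
            ≠ f (x₂ * ℓ + q.1 - 1) (y₂ * ℓ + q.2 - 1)) ∧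
      -- (iii) different north outputs: no shared tile types in A, B₂*, C₂
      (1 ≤ x₁ → 1 ≤ x₂ → stN ℓ f x₁ y₁ ≠ stN ℓ f x₂ y₂ →
        ∀ p ∈ ([(0, 0), (0, ℓ - 2), (0, ℓ - 1)] : List (ℕ × ℕ)),
        ∀ q ∈ ([(0, 0), (0, ℓ - 2), (0, ℓ - 1)] : List (ℕ × ℕ)),
          availAt x₁ y₁ p → availAt x₂ y₂ q →
          f (x₁ * ℓ + p.1 - 1) (y₁ * ℓ + p.2 - 1)
            ≠ f (x₂ * ℓ + q.1 - 1) (y₂ * ℓ + q.2 - 1)) := by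
  obtain ⟨F, ρ, hwF, hh6, hbij, hPρ⟩ := hI
  have hw2 : 2 ≤ w := by rw [hwF]; unfold widthF; omega
  have hh1 : 1 ≤ h := by omega
  have hPb : ∀ x y, x < w → y < h → 1 ≤ P x y ∧ P x y ≤ k := by
    intro x y hx hy
    have hxw : x < widthF F := by omega
    have hy6 : y < 6 := by omega
    have hmemc : patF F x y ∈ colorsOf (widthF F) 6 (patF F) := by
      unfold colorsOf
      rw [Finset.mem_image]
      exact ⟨(x, y), Finset.mem_product.2 ⟨Finset.mem_range.2 hxw, Finset.mem_range.2 hy6⟩, rfl⟩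
    have hmems := hbij.mapsTo (Finset.mem_coe.2 hmemc)
    rw [Set.mem_Icc] at hmems
    rw [hPρ x hx y hy]
    exact hmems
  have hk1 : 1 ≤ k := by
    have := hPb 0 0 (by omega) (by omega)
    omega
  have hQW : QW k w = ℓ * w + 2 := by rw [hℓ]; rfl
  have hQH : QH k h = ℓ * h + 2 := by rw [hℓ]; rfl
  obtain ⟨hmem', hseedE, hseedN, hWm, hSm⟩ := hf
  have C : Ctx k w h ℓ P Θ f :=
    { hk := hk1, hw := hw2, hh := hh1, hl := hℓ
      hPlo := fun x y hx hy => (hPb x y hx hy).1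
      hPhi := fun x y hx hy => (hPb x y hx hy).2
      mem := fun X Y hX hY => hmem' X (by rw [hQW]; exact hX) Y (by rw [hQH]; exact hY)
      hS := fun X Y hX hY => hSm X (by rw [hQW]; exact hX) Y (by rw [hQH]; exact hY)
      hW := fun X Y hX hY => hWm X (by rw [hQW]; exact hX) Y (by rw [hQH]; exact hY)
      col := fun X Y hX hY => hcol X (by rw [hQW]; exact hX) Y (by rw [hQH]; exact hY)
      dir := hD, hgray := hg, hblack := hb }
  intro x₁ y₁ x₂ y₂ hx₁ hy₁ hx₂ hy₂
  have h13 := C.L13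
  refine ⟨?_, ?_, ?_⟩
  · -- (i)
    intro hPne p hp q hq hav1 hav2
    simp only [List.mem_cons, List.mem_singleton, List.not_mem_nil, or_false] at hp hq
    rcases hp with rfl | rfl | rfl | rfl | rfl
    · -- p = A
      have a1x : 1 ≤ x₁ := hav1.1.resolve_right (by simp)
      have a1y : 1 ≤ y₁ := hav1.2.resolve_right (by simp)
      rcases hq with rfl | rfl | rfl | rfl | rfl
      · have a2x : 1 ≤ x₂ := hav2.1.resolve_right (by simp)
        have a2y : 1 ≤ y₂ := hav2.2.resolve_right (by simp)
        intro heq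
        exact hPne (C.detC1 hx₁ hy₁ hx₂ hy₂ a1y a2y
          (C.B1toC1 hx₁ hy₁ hx₂ hy₂ a1y a2y
            (C.AtoB1 hx₁ hy₁ hx₂ hy₂ a1x a1y a2x a2y heq)))
      · have a2y : 1 ≤ y₂ := hav2.2.resolve_right (by simp)
        intro heq
        exact C.killAB1 hx₁ hy₁ hx₂ hy₂ a1x a1y a2y heq
      · have a2y : 1 ≤ y₂ := hav2.2.resolve_right (by simp)
        intro heq
        exact C.killAC1 hx₁ hy₁ hx₂ hy₂ a1x a1y a2y heq
      · have a2x : 1 ≤ x₂ := hav2.1.resolve_right (by simp)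
        intro heq
        exact C.killAB2 hx₁ hy₁ hx₂ hy₂ a1x a1y a2x heq
      · have a2x : 1 ≤ x₂ := hav2.1.resolve_right (by simp)
        intro heq
        exact C.killAC2 hx₁ hy₁ hx₂ hy₂ a1x a1y a2x heq
    · -- p = B₁*
      have a1y : 1 ≤ y₁ := hav1.2.resolve_right (by simp)
      rcases hq with rfl | rfl | rfl | rfl | rfl
      · have a2x : 1 ≤ x₂ := hav2.1.resolve_right (by simp)
        have a2y : 1 ≤ y₂ := hav2.2.resolve_right (by simp)
        intro heq
        exact C.killAB1 hx₂ hy₂ hx₁ hy₁ a2x a2y a1y heq.symm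
      · have a2y : 1 ≤ y₂ := hav2.2.resolve_right (by simp)
        intro heq
        exact hPne (C.detC1 hx₁ hy₁ hx₂ hy₂ a1y a2y
          (C.B1toC1 hx₁ hy₁ hx₂ hy₂ a1y a2y heq))
      · have a2y : 1 ≤ y₂ := hav2.2.resolve_right (by simp)
        intro heq
        exact C.killB1C1 hx₁ hy₁ hx₂ hy₂ a1y a2y heq
      · have a2x : 1 ≤ x₂ := hav2.1.resolve_right (by simp)
        intro heq
        exact C.killB1B2 hx₁ hy₁ hx₂ hy₂ a1y a2x heq
      · have a2x : 1 ≤ x₂ := hav2.1.resolve_right (by simp)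
        intro heq
        exact C.killB1C2 hx₁ hy₁ hx₂ hy₂ a1y a2x heq
    · -- p = C₁
      have a1y : 1 ≤ y₁ := hav1.2.resolve_right (by simp)
      rcases hq with rfl | rfl | rfl | rfl | rfl
      · have a2x : 1 ≤ x₂ := hav2.1.resolve_right (by simp)
        have a2y : 1 ≤ y₂ := hav2.2.resolve_right (by simp)
        intro heq
        exact C.killAC1 hx₂ hy₂ hx₁ hy₁ a2x a2y a1y heq.symm
      · have a2y : 1 ≤ y₂ := hav2.2.resolve_right (by simp)
        intro heq
        exact C.killB1C1 hx₂ hy₂ hx₁ hy₁ a2y a1y heq.symm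
      · have a2y : 1 ≤ y₂ := hav2.2.resolve_right (by simp)
        intro heq
        exact hPne (C.detC1 hx₁ hy₁ hx₂ hy₂ a1y a2y heq)
      · have a2x : 1 ≤ x₂ := hav2.1.resolve_right (by simp)
        intro heq
        exact C.killC1B2 hx₁ hy₁ hx₂ hy₂ a1y a2x heq
      · have a2x : 1 ≤ x₂ := hav2.1.resolve_right (by simp)
        intro heq
        exact C.killC1C2 hx₁ hy₁ hx₂ hy₂ a1y a2x heq
    · -- p = B₂*
      have a1x : 1 ≤ x₁ := hav1.1.resolve_right (by simp)
      rcases hq with rfl | rfl | rfl | rfl | rfl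
      · have a2x : 1 ≤ x₂ := hav2.1.resolve_right (by simp)
        have a2y : 1 ≤ y₂ := hav2.2.resolve_right (by simp)
        intro heq
        exact C.killAB2 hx₂ hy₂ hx₁ hy₁ a2x a2y a1x heq.symm
      · have a2y : 1 ≤ y₂ := hav2.2.resolve_right (by simp)
        intro heq
        exact C.killB1B2 hx₂ hy₂ hx₁ hy₁ a2y a1x heq.symm
      · have a2y : 1 ≤ y₂ := hav2.2.resolve_right (by simp)
        intro heq
        exact C.killC1B2 hx₂ hy₂ hx₁ hy₁ a2y a1x heq.symm
      · have a2x : 1 ≤ x₂ := hav2.1.resolve_right (by simp)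
        intro heq
        exact hPne (C.detC2 hx₁ hy₁ hx₂ hy₂ a1x a2x
          (C.B2toC2 hx₁ hy₁ hx₂ hy₂ a1x a2x heq))
      · have a2x : 1 ≤ x₂ := hav2.1.resolve_right (by simp)
        intro heq
        exact C.killB2C2 hx₁ hy₁ hx₂ hy₂ a1x a2x heq
    · -- p = C₂
      have a1x : 1 ≤ x₁ := hav1.1.resolve_right (by simp)
      rcases hq with rfl | rfl | rfl | rfl | rfl
      · have a2x : 1 ≤ x₂ := hav2.1.resolve_right (by simp)
        have a2y : 1 ≤ y₂ := hav2.2.resolve_right (by simp)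
        intro heq
        exact C.killAC2 hx₂ hy₂ hx₁ hy₁ a2x a2y a1x heq.symm
      · have a2y : 1 ≤ y₂ := hav2.2.resolve_right (by simp)
        intro heq
        exact C.killB1C2 hx₂ hy₂ hx₁ hy₁ a2y a1x heq.symm
      · have a2y : 1 ≤ y₂ := hav2.2.resolve_right (by simp)
        intro heq
        exact C.killC1C2 hx₂ hy₂ hx₁ hy₁ a2y a1x heq.symm
      · have a2x : 1 ≤ x₂ := hav2.1.resolve_right (by simp)
        intro heq
        exact C.killB2C2 hx₂ hy₂ hx₁ hy₁ a2x a1x heq.symm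
      · have a2x : 1 ≤ x₂ := hav2.1.resolve_right (by simp)
        intro heq
        exact hPne (C.detC2 hx₁ hy₁ hx₂ hy₂ a1x a2x heq)
  · -- (ii)
    intro hy1e hy2e hstE p hp q hq hav1 hav2
    simp only [List.mem_cons, List.mem_singleton, List.not_mem_nil, or_false] at hp hq
    rcases hp with rfl | rfl | rfl
    · have a1x : 1 ≤ x₁ := hav1.1.resolve_right (by simp)
      rcases hq with rfl | rfl | rfl
      · have a2x : 1 ≤ x₂ := hav2.1.resolve_right (by simp)
        intro heq
        apply hstE
        have hc := C.B1toC1 hx₁ hy₁ hx₂ hy₂ hy1e hy2e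
          (C.AtoB1 hx₁ hy₁ hx₂ hy₂ a1x hy1e a2x hy2e heq)
        have he := congrArg Tile.east hc
        rw [show x₁ * ℓ + (ℓ - 1) - 1 = x₁ * ℓ + ℓ - 2 by omega,
          show x₂ * ℓ + (ℓ - 1) - 1 = x₂ * ℓ + ℓ - 2 by omega] at he
        exact he
      · intro heq
        exact C.killAB1 hx₁ hy₁ hx₂ hy₂ a1x hy1e hy2e heq
      · intro heq
        exact C.killAC1 hx₁ hy₁ hx₂ hy₂ a1x hy1e hy2e heq
    · rcases hq with rfl | rfl | rfl
      · have a2x : 1 ≤ x₂ := hav2.1.resolve_right (by simp)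
        intro heq
        exact C.killAB1 hx₂ hy₂ hx₁ hy₁ a2x hy2e hy1e heq.symm
      · intro heq
        apply hstE
        have hc := C.B1toC1 hx₁ hy₁ hx₂ hy₂ hy1e hy2e heq
        have he := congrArg Tile.east hc
        rw [show x₁ * ℓ + (ℓ - 1) - 1 = x₁ * ℓ + ℓ - 2 by omega,
          show x₂ * ℓ + (ℓ - 1) - 1 = x₂ * ℓ + ℓ - 2 by omega] at he
        exact he
      · intro heq
        exact C.killB1C1 hx₁ hy₁ hx₂ hy₂ hy1e hy2e heq
    · rcases hq with rfl | rfl | rfl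
      · have a2x : 1 ≤ x₂ := hav2.1.resolve_right (by simp)
        intro heq
        exact C.killAC1 hx₂ hy₂ hx₁ hy₁ a2x hy2e hy1e heq.symm
      · intro heq
        exact C.killB1C1 hx₂ hy₂ hx₁ hy₁ hy2e hy1e heq.symm
      · intro heq
        apply hstE
        have he := congrArg Tile.east heq
        rw [show x₁ * ℓ + (ℓ - 1) - 1 = x₁ * ℓ + ℓ - 2 by omega,
          show x₂ * ℓ + (ℓ - 1) - 1 = x₂ * ℓ + ℓ - 2 by omega] at he
        exact he
  · -- (iii)
    intro hx1e hx2e hstN p hp q hq hav1 hav2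
    simp only [List.mem_cons, List.mem_singleton, List.not_mem_nil, or_false] at hp hq
    rcases hp with rfl | rfl | rfl
    · have a1y : 1 ≤ y₁ := hav1.2.resolve_right (by simp)
      rcases hq with rfl | rfl | rfl
      · have a2y : 1 ≤ y₂ := hav2.2.resolve_right (by simp)
        intro heq
        apply hstN
        have hc := C.B2toC2 hx₁ hy₁ hx₂ hy₂ hx1e hx2e
          (C.AtoB2 hx₁ hy₁ hx₂ hy₂ hx1e a1y hx2e a2y heq)
        have he := congrArg Tile.north hc
        rw [show y₁ * ℓ + (ℓ - 1) - 1 = y₁ * ℓ + ℓ - 2 by omega,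
          show y₂ * ℓ + (ℓ - 1) - 1 = y₂ * ℓ + ℓ - 2 by omega] at he
        exact he
      · intro heq
        exact C.killAB2 hx₁ hy₁ hx₂ hy₂ hx1e a1y hx2e heq
      · intro heq
        exact C.killAC2 hx₁ hy₁ hx₂ hy₂ hx1e a1y hx2e heq
    · rcases hq with rfl | rfl | rfl
      · have a2y : 1 ≤ y₂ := hav2.2.resolve_right (by simp)
        intro heq
        exact C.killAB2 hx₂ hy₂ hx₁ hy₁ hx2e a2y hx1e heq.symm
      · intro heq
        apply hstN
        have hc := C.B2toC2 hx₁ hy₁ hx₂ hy₂ hx1e hx2e heq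
        have he := congrArg Tile.north hc
        rw [show y₁ * ℓ + (ℓ - 1) - 1 = y₁ * ℓ + ℓ - 2 by omega,
          show y₂ * ℓ + (ℓ - 1) - 1 = y₂ * ℓ + ℓ - 2 by omega] at he
        exact he
      · intro heq
        exact C.killB2C2 hx₁ hy₁ hx₂ hy₂ hx1e hx2e heq
    · rcases hq with rfl | rfl | rfl
      · have a2y : 1 ≤ y₂ := hav2.2.resolve_right (by simp)
        intro heq
        exact C.killAC2 hx₂ hy₂ hx₁ hy₁ hx2e a2y hx1e heq.symm
      · intro heq
        exact C.killB2C2 hx₂ hy₂ hx₁ hy₁ hx2e hx1e heq.symm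
      · intro heq
        apply hstN
        have he := congrArg Tile.north heq
        rw [show y₁ * ℓ + (ℓ - 1) - 1 = y₁ * ℓ + ℓ - 2 by omega,
          show y₂ * ℓ + (ℓ - 1) - 1 = y₂ * ℓ + ℓ - 2 by omega] at he
        exact he
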